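/- arXiv:1411.3791 — 5 statements merged into one kernel-verified Lean document; each statement's English description precedes it below -/
import Mathlib

section
/- Given a well-formed choreography H, the testing consonance relation — C ⊗^r_test H iff NF(C \\ (I(C) − I(⟦H⟧_r))) ⪯_test NF(⟦H⟧_r) — is a conformance relation: for every role r_i of H there exists a contract C_i with C_i ⊗^{r_i}_test H (namely the projection itself), and whenever C_1 ⊗^{r_1}_test H, …, C_n ⊗^{r_n}_test H for all roles r_1,…,r_n of H, the system [C_1]_{r_1} || … || [C_n]_{r_n} implements H. -/
/-!
Formalization of choreographies, orchestrations and behavioural contracts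
following Bravetti–Zavattaro, "Choreographies and Behavioural Contracts on
the Way to Dynamic Updates".
-/

/-- Action names (a denumerable set). -/
abbrev AName := ℕ
/-- Roles. -/
abbrev Role := ℕ

/-! ### The choreography calculus -/

/-- Choreographies, including the auxiliary terms `one` (successful completion)
and `zero` (halt). -/
inductive Chor : Type
  | comm : AName → Role → Role → Chor      -- a_{r→s}
  | choice : Chor → Chor → Chor
  | seq : Chor → Chor → Chor
  | par : Chor → Chor → Chor
  | star : Chor → Chor
  | one : Chor
  | zero : Chor
  deriving DecidableEq

/-- Labels of the choreography semantics: interactions `a_{r→s}` and `√`. -/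
inductive CLabel : Type
  | comm : AName → Role → Role → CLabel
  | tick : CLabel
  deriving DecidableEq

/-- Operational semantics of choreographies. -/
inductive CStep : Chor → CLabel → Chor → Prop
  | comm : CStep (.comm a r s) (.comm a r s) .one
  | one : CStep .one .tick .zero
  | starTick : CStep (.star H) .tick .zero
  | choiceL : CStep H η H' → CStep (.choice H L) η H'
  | choiceR : CStep L η L' → CStep (.choice H L) η L'
  | seqL : CStep H η H' → η ≠ .tick → CStep (.seq H L) η (.seq H' L)
  | seqTick : CStep H .tick H' → CStep L η L' → CStep (.seq H L) η L'
  | parL : CStep H η H' → η ≠ .tick → CStep (.par H L) η (.par H' L)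
  | parR : CStep L η L' → η ≠ .tick → CStep (.par H L) η (.par H L')
  | parTick : CStep H .tick H' → CStep L .tick L' → CStep (.par H L) .tick (.par H' L')
  | starStep : CStep H η H' → η ≠ .tick → CStep (.star H) η (.seq H' (.star H))

/-- Roles syntactically occurring in a choreography. -/
def rolesC : Chor → Finset Role
  | .comm _ r s => {r, s}
  | .choice H L | .seq H L | .par H L => rolesC H ∪ rolesC L
  | .star H => rolesC H
  | .one | .zero => ∅

/-- Action names syntactically occurring in a choreography. -/
def namesC : Chor → Finset AName
  | .comm a _ _ => {a}
  | .choice H L | .seq H L | .par H L => namesC H ∪ namesC L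
  | .star H => namesC H
  | .one | .zero => ∅

/-! ### The orchestration calculus -/

/-- Orchestrations (also used as behavioural contract terms). -/
inductive Orc : Type
  | zero : Orc
  | one : Orc
  | tau : Orc
  | inp : AName → Orc              -- receive a
  | out : AName → Role → Orc       -- invoke ā directed to role l
  | seq : Orc → Orc → Orc
  | choice : Orc → Orc → Orc
  | par : Orc → Orc → Orc
  | star : Orc → Orc
  deriving DecidableEq

/-- Labels of the orchestration/contract semantics. -/
inductive OLabel : Type
  | tau : OLabel
  | inp : AName → OLabel
  | out : AName → Role → OLabel
  | tick : OLabel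
  deriving DecidableEq

/-- Operational semantics of orchestrations/contracts. -/
inductive OStep : Orc → OLabel → Orc → Prop
  | one : OStep .one .tick .zero
  | tau : OStep .tau .tau .one
  | inp : OStep (.inp a) (.inp a) .one
  | out : OStep (.out a l) (.out a l) .one
  | choiceL : OStep C μ C' → OStep (.choice C D) μ C'
  | choiceR : OStep D μ D' → OStep (.choice C D) μ D'
  | seqL : OStep C μ C' → μ ≠ .tick → OStep (.seq C D) μ (.seq C' D)
  | seqTick : OStep C .tick C' → OStep D μ D' → OStep (.seq C D) μ D'
  | parL : OStep C μ C' → μ ≠ .tick → OStep (.par C D) μ (.par C' D)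
  | parR : OStep D μ D' → μ ≠ .tick → OStep (.par C D) μ (.par C D')
  | parTick : OStep C .tick C' → OStep D .tick D' → OStep (.par C D) .tick (.par C' D')
  | starTick : OStep (.star C) .tick .zero
  | starStep : OStep C μ C' → μ ≠ .tick → OStep (.star C) μ (.seq C' (.star C))

/-! ### Systems (compositions of located orchestrations/contracts) -/

/-- Systems: parallel compositions of located orchestrations `[C]_l`. -/
inductive Sys : Type
  | atom : Orc → Role → Sys
  | par : Sys → Sys → Sys
  deriving DecidableEq

/-- Labels of the system semantics. -/
inductive SLabel : Type
  | tau : SLabel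
  | inp : AName → Role → SLabel            -- a_s
  | out : AName → Role → Role → SLabel     -- ā_{r s}
  | comm : AName → Role → Role → SLabel    -- a_{r→s}
  | tick : SLabel
  deriving DecidableEq

/-- Operational semantics of systems. -/
inductive SStep : Sys → SLabel → Sys → Prop
  | atomTau : OStep C .tau C' → SStep (.atom C r) .tau (.atom C' r)
  | atomInp : OStep C (.inp a) C' → SStep (.atom C r) (.inp a r) (.atom C' r)
  | atomOut : OStep C (.out a s) C' → SStep (.atom C r) (.out a r s) (.atom C' r)
  | atomTick : OStep C .tick C' → SStep (.atom C r) .tick (.atom C' r)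
  | parL : SStep P μ P' → μ ≠ .tick → SStep (.par P Q) μ (.par P' Q)
  | parR : SStep Q μ Q' → μ ≠ .tick → SStep (.par P Q) μ (.par P Q')
  | commLR : SStep P (.out a r s) P' → SStep Q (.inp a s) Q' →
      SStep (.par P Q) (.comm a r s) (.par P' Q')
  | commRL : SStep P (.inp a s) P' → SStep Q (.out a r s) Q' →
      SStep (.par P Q) (.comm a r s) (.par P' Q')
  | parTick : SStep P .tick P' → SStep Q .tick Q' → SStep (.par P Q) .tick (.par P' Q')

/-- One step of a completely specified system: an internal `τ` step or a
completed interaction `a_{r→s}`. -/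
def CompleteStep (P P' : Sys) : Prop :=
  SStep P .tau P' ∨ ∃ a r s, SStep P (.comm a r s) P'

/-- Reachability through complete (τ / completed-interaction) steps. -/
inductive Reach : Sys → Sys → Prop
  | refl (P) : Reach P P
  | step : CompleteStep P P' → Reach P' P'' → Reach P P''

/-- `P` can perform the successful-termination label `√`. -/
def CanTick (P : Sys) : Prop := ∃ P', SStep P .tick P'

/-- Correct composition `P↓`: every reachable state can reach a state able to
perform `√`. -/
def Correct (P : Sys) : Prop :=
  ∀ P', Reach P P' → ∃ P'', Reach P' P'' ∧ CanTick P''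

/-- `WTrace P w` is the weak transition `P ⇒^{w√}`: `P` performs the sequence
`w` of completed interactions `a_{r→s}` (absorbing `τ` steps) and then `√`. -/
inductive WTrace : Sys → List (AName × Role × Role) → Prop
  | tick : CanTick P → WTrace P []
  | tau : SStep P .tau P' → WTrace P' w → WTrace P w
  | comm : SStep P (.comm a r s) P' → WTrace P' w → WTrace P ((a, r, s) :: w)

/-- `CTrace H w` is the transition sequence `H →^{w√}`. -/
inductive CTrace : Chor → List (AName × Role × Role) → Prop
  | tick : CStep H .tick H' → CTrace H []
  | comm : CStep H (.comm a r s) H' → CTrace H' w → CTrace H ((a, r, s) :: w)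

/-- `P` implements `H` (written `P ∝ H`): `P` is a correct composition and all
its conversations (followed by `√`) are admitted by `H`. -/
def Implements (P : Sys) (H : Chor) : Prop :=
  Correct P ∧ ∀ w, WTrace P w → CTrace H w

/-! ### Projection and well-formedness -/

/-- Projection of a choreography on a role (homomorphic over all operators). -/
def proj : Chor → Role → Orc
  | .comm a r s, t => if t = r then .out a s else if t = s then .inp a else .one
  | .choice H L, t => .choice (proj H t) (proj L t)
  | .seq H L, t => .seq (proj H t) (proj L t)
  | .par H L, t => .par (proj H t) (proj L t)
  | .star H, t => .star (proj H t)
  | .one, _ => .one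
  | .zero, _ => .zero

/-- Parallel composition of a list of located contracts
`[C_1]_{l_1} || … || [C_n]_{l_n}`. -/
def composeC : List (Orc × Role) → Sys
  | [] => .atom .one 0
  | [(C, l)] => .atom C l
  | (C, l) :: x :: xs => .par (.atom C l) (composeC (x :: xs))

/-- Well-formed choreography: the system obtained by projecting `H` on all its
roles implements `H` (for any enumeration of its roles). -/
def WellFormed (H : Chor) : Prop :=
  ∀ L : List Role, L.Nodup → L.toFinset = rolesC H →
    Implements (composeC (L.map fun r => (proj H r, r))) H

/-! ### Behavioural contracts: basic notions -/

/-- Roles targeted by output actions syntactically occurring in a contract. -/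
def oroles : Orc → Finset Role
  | .out _ l => {l}
  | .seq C D | .choice C D | .par C D => oroles C ∪ oroles D
  | .star C => oroles C
  | _ => ∅

/-- Input action names syntactically occurring in a contract: `I(C)`. -/
def inames : Orc → Finset AName
  | .inp a => {a}
  | .seq C D | .choice C D | .par C D => inames C ∪ inames D
  | .star C => inames C
  | _ => ∅

/-- `C \\ M`: replace every input on a name in `M` occurring in `C` by `0`. -/
def restrict (C : Orc) (M : Finset AName) : Orc :=
  match C with
  | .inp a => if a ∈ M then .zero else .inp a
  | .seq C D => .seq (restrict C M) (restrict D M)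
  | .choice C D => .choice (restrict C M) (restrict D M)
  | .par C D => .par (restrict C M) (restrict D M)
  | .star C => .star (restrict C M)
  | C => C

/-- Reachability in the contract LTS (through any labels). -/
inductive OReach : Orc → Orc → Prop
  | refl (C) : OReach C C
  | step : OStep C μ C' → OReach C' C'' → OReach C C''

/-- Output persistence: once a contract decides to execute an output, its
actual execution is mandatory to reach successful termination. -/
def OutputPersistent (C : Orc) : Prop :=
  ∀ C', OReach C C' → ∀ a l, (∃ D, OStep C' (.out a l) D) →
    (¬ ∃ D, OStep C' .tick D) ∧
    (∀ μ C'', OStep C' μ C'' → μ ≠ .out a l → ∃ D, OStep C'' (.out a l) D)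

/-- The list of roles of the located contracts occurring in a system. -/
def rolesList : Sys → List Role
  | .atom _ r => [r]
  | .par P Q => rolesList P ++ rolesList Q

/-- No contract sends outputs to its own role. -/
def NoSelfOut : Sys → Prop
  | .atom C r => r ∉ oroles C
  | .par P Q => NoSelfOut P ∧ NoSelfOut Q

/-- Well-formed system: pairwise distinct roles, no output to one's own role. -/
def WFSys (P : Sys) : Prop := (rolesList P).Nodup ∧ NoSelfOut P

/-- All contracts occurring in the system are output persistent. -/
def AllOP : Sys → Prop
  | .atom C _ => OutputPersistent C
  | .par P Q => AllOP P ∧ AllOP Q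

/-- The subcontract relation `C' ⪯ C` (compliance testing): for every fresh
role `l` and every test composition `P` of output persistent contracts not
using `l`, correctness of `[C]_l || P` implies correctness of `[C']_l || P`. -/
def Subcontract (C' C : Orc) : Prop :=
  ∀ l : Role, l ∉ oroles C ∪ oroles C' →
    ∀ P : Sys, AllOP P → WFSys P → l ∉ rolesList P →
      Correct (.par (.atom C l) P) → Correct (.par (.atom C' l) P)

/-- Independent subcontract pre-order over output persistent contracts:
a pre-order such that refining any number of contracts of a correct system
independently preserves correctness. -/
def IndepSubcontractPre (le : Orc → Orc → Prop) : Prop :=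
  (∀ C, OutputPersistent C → le C C) ∧
  (∀ C₁ C₂ C₃, OutputPersistent C₁ → OutputPersistent C₂ → OutputPersistent C₃ →
      le C₁ C₂ → le C₂ C₃ → le C₁ C₃) ∧
  (∀ L : List (Orc × Orc × Role), L ≠ [] →
    (∀ x ∈ L, OutputPersistent x.1 ∧ OutputPersistent x.2.1 ∧ le x.2.1 x.1) →
    (L.map fun x => x.2.2).Nodup →
    (∀ x ∈ L, x.2.2 ∉ oroles x.1 ∪ oroles x.2.1) →
    Correct (composeC (L.map fun x => (x.1, x.2.2))) →
    Correct (composeC (L.map fun x => (x.2.1, x.2.2))))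

/-- An uncontrollable contract: no test composition can lead it to success. -/
def Uncontrollable (C : Orc) : Prop :=
  ¬ ∃ (l : Role) (P : Sys), l ∉ oroles C ∧ AllOP P ∧ WFSys P ∧ l ∉ rolesList P ∧
      Correct (.par (.atom C l) P)

/-- Weak traces of a contract: sequences of visible labels, absorbing `τ`. -/
inductive WOTrace : Orc → List OLabel → Prop
  | nil (C) : WOTrace C []
  | tau : OStep C .tau C' → WOTrace C' w → WOTrace C w
  | vis : OStep C μ C' → μ ≠ .tau → WOTrace C' w → WOTrace C (μ :: w)

/-! ### Should-testing (fair testing) à la Rensink–Vogler -/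

/-- Labels of tests: internal moves, synchronization with a (visible) action of
the tested contract (`√` included as any other action), and test success `√'`. -/
inductive TLab : Type
  | tau : TLab
  | sync : OLabel → TLab
  | succ : TLab

/-- A test: a labelled transition system over `TLab`. -/
structure TestLTS where
  S : Type
  step : S → TLab → S → Prop
  init : S

/-- Steps of a contract/test configuration. -/
inductive TCStep (T : TestLTS) : (Orc × T.S) → (Orc × T.S) → Prop
  | ctau : OStep C .tau C' → TCStep T (C, t) (C', t)
  | ttau : T.step t .tau t' → TCStep T (C, t) (C, t')
  | sync : OStep C μ C' → μ ≠ OLabel.tau → T.step t (.sync μ) t' → TCStep T (C, t) (C', t')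

/-- Reachability of configurations. -/
inductive TCReach (T : TestLTS) : (Orc × T.S) → (Orc × T.S) → Prop
  | refl (c) : TCReach T c c
  | step : TCStep T c c' → TCReach T c' c'' → TCReach T c c''

/-- `C` should-passes `T`: from every reachable configuration a configuration
in which the test can perform the success action is reachable. -/
def Shd (C : Orc) (T : TestLTS) : Prop :=
  ∀ c, TCReach T (C, T.init) c → ∃ c', TCReach T c c' ∧ ∃ t', T.step c'.2 .succ t'

/-- The should-testing (fair testing) pre-order: `ShouldPre C' C` holds iff
every test that `C` should-passes is also should-passed by `C'`. -/
def ShouldPre (C' C : Orc) : Prop := ∀ T : TestLTS, Shd C T → Shd C' T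

/-- The normal form `NF(C)`: the recursive-equations presentation of the LTS of
`C`.  Since contracts are here represented directly by LTS-denoting terms and
the should-testing pre-order only depends on the underlying LTS, the normal
form is the term itself. -/
def NF (C : Orc) : Orc := C

/-- A conformance relation for a (well-formed) choreography `H`: a relation
between contracts and roles of `H` such that every role is inhabited and any
choice of related contracts, one per role of `H`, yields a system that
implements `H`. -/
def ConformanceRel (R : Orc → Role → Prop) (H : Chor) : Prop :=
  (∀ r ∈ rolesC H, ∃ C, R C r) ∧
  (∀ L : List (Orc × Role), L ≠ [] → (L.map Prod.snd).Nodup →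
    (L.map Prod.snd).toFinset = rolesC H →
    (∀ x ∈ L, R x.1 x.2) → Implements (composeC L) H)

/-- Testing consonance: `C ⊗^r_test H` iff
`NF(C \\ (I(C) − I(⟦H⟧_r))) ⪯_test NF(⟦H⟧_r)`. -/
def Consonant (C : Orc) (r : Role) (H : Chor) : Prop :=
  ShouldPre (NF (restrict C (inames C \ inames (proj H r)))) (NF (proj H r))


/-!
A projection is consonant with its own role because pruning it removes nothing. For conformance,
let `Cᵢ` be consonant with `rᵢ` and `Cᵢ'` the pruned contract `Cᵢ \ (I(Cᵢ) − I(⟦H⟧_{rᵢ}))`.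

Should-testing is preserved by every environment: running the environment of a component as a
test shows that `C' ⪯_test C` transfers correctness of `[C]_l || P` to `[C']_l || P`, and
conversations of `[C']_l || P` to `[C]_l || P`. Replacing the projections of the well-formed
system by the `Cᵢ'` one at a time (up to a bisimilarity that rearranges parallel components), the
system `[C₁']_{r₁} || … || [Cₙ']_{rₙ}` is correct and all its conversations are conversations of
`H`.

Should-testing also implies trace inclusion, so an output `a` to `s` that `Cᵢ'` can ever perform
is an output of `⟦H⟧_{rᵢ}`, whence `a ∈ I(⟦H⟧_s)`. The inputs pruned from the contract at `s` are
therefore never offered by a partner, and `[C₁]_{r₁} || … || [Cₙ]_{rₙ}` and its pruned version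
simulate each other on internal steps, interactions and `√`.
-/

theorem restrict_empty (C : Orc) : restrict C ∅ = C := by
  induction C <;> simp [restrict, *]

theorem OStep.to_restrict {M : Finset AName} {C C' : Orc} {μ : OLabel} (h : OStep C μ C')
    (hμ : ∀ a ∈ M, μ ≠ .inp a) : OStep (restrict C M) μ (restrict C' M) := by
  induction h with
  | one => exact .one
  | tau => exact .tau
  | @inp a =>
    have ha : a ∉ M := fun ha => hμ a ha rfl
    simpa [restrict, ha] using OStep.inp
  | out => exact .out
  | choiceL _ ih => exact .choiceL (ih hμ)
  | choiceR _ ih => exact .choiceR (ih hμ)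
  | seqL _ hne ih => exact .seqL (ih hμ) hne
  | seqTick _ _ ih₁ ih₂ => exact .seqTick (ih₁ (by simp)) (ih₂ hμ)
  | parL _ hne ih => exact .parL (ih hμ) hne
  | parR _ hne ih => exact .parR (ih hμ) hne
  | parTick _ _ ih₁ ih₂ => exact .parTick (ih₁ (by simp)) (ih₂ (by simp))
  | starTick => exact .starTick
  | starStep _ hne ih => exact .starStep (ih hμ) hne

theorem OStep.of_restrict {M : Finset AName} {C E : Orc} {μ : OLabel}
    (h : OStep (restrict C M) μ E) : ∃ C', OStep C μ C' ∧ E = restrict C' M := by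
  induction C generalizing μ E with
  | zero => cases h
  | one => cases h; exact ⟨_, .one, rfl⟩
  | tau => cases h; exact ⟨_, .tau, rfl⟩
  | inp a =>
    by_cases ha : a ∈ M <;> simp only [restrict, ha, if_true, if_false] at h <;> cases h
    exact ⟨_, .inp, rfl⟩
  | out => cases h; exact ⟨_, .out, rfl⟩
  | seq A B ihA ihB =>
    cases h with
    | seqL h hne => obtain ⟨A', hA, rfl⟩ := ihA h; exact ⟨_, .seqL hA hne, rfl⟩
    | seqTick h₁ h₂ =>
      obtain ⟨A', hA, -⟩ := ihA h₁
      obtain ⟨B', hB, rfl⟩ := ihB h₂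
      exact ⟨_, .seqTick hA hB, rfl⟩
  | choice A B ihA ihB =>
    cases h with
    | choiceL h => obtain ⟨A', hA, rfl⟩ := ihA h; exact ⟨_, .choiceL hA, rfl⟩
    | choiceR h => obtain ⟨B', hB, rfl⟩ := ihB h; exact ⟨_, .choiceR hB, rfl⟩
  | par A B ihA ihB =>
    cases h with
    | parL h hne => obtain ⟨A', hA, rfl⟩ := ihA h; exact ⟨_, .parL hA hne, rfl⟩
    | parR h hne => obtain ⟨B', hB, rfl⟩ := ihB h; exact ⟨_, .parR hB hne, rfl⟩
    | parTick h₁ h₂ =>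
      obtain ⟨A', hA, rfl⟩ := ihA h₁
      obtain ⟨B', hB, rfl⟩ := ihB h₂
      exact ⟨_, .parTick hA hB, rfl⟩
  | star A ihA =>
    cases h with
    | starTick => exact ⟨_, .starTick, rfl⟩
    | starStep h hne => obtain ⟨A', hA, rfl⟩ := ihA h; exact ⟨_, .starStep hA hne, rfl⟩

def outputs : Orc → Finset (AName × Role)
  | .out a l => {(a, l)}
  | .seq C D | .choice C D | .par C D => outputs C ∪ outputs D
  | .star C => outputs C
  | _ => ∅

theorem OStep.outputs_subset {C C' : Orc} {μ : OLabel} (h : OStep C μ C') :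
    outputs C' ⊆ outputs C := by
  induction h <;> simp only [outputs] <;> grind

theorem OStep.mem_outputs {C C' : Orc} {a : AName} {l : Role} (h : OStep C (.out a l) C') :
    (a, l) ∈ outputs C := by
  generalize hμ : OLabel.out a l = μ at h
  induction h <;> simp_all [outputs]

theorem WOTrace.mem_outputs {C : Orc} {w : List OLabel} {a : AName} {l : Role}
    (h : WOTrace C w) (hw : .out a l ∈ w) : (a, l) ∈ outputs C := by
  induction h with
  | nil => cases hw
  | tau hC _ ih => exact hC.outputs_subset (ih hw)
  | vis hC _ _ ih =>
    rcases List.mem_cons.1 hw with rfl | hw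
    · exact hC.mem_outputs
    · exact hC.outputs_subset (ih hw)

theorem OReach.exists_woTrace_mem {C D D' : Orc} {μ : OLabel} (h : OReach C D)
    (hD : OStep D μ D') (hμ : μ ≠ .tau) : ∃ w, WOTrace C w ∧ μ ∈ w := by
  induction h with
  | refl => exact ⟨[μ], .vis hD hμ (.nil _), List.mem_singleton_self μ⟩
  | @step _ ν _ _ hC _ ih =>
    obtain ⟨w, hw, hmem⟩ := ih hD
    by_cases hν : ν = .tau
    · subst hν; exact ⟨w, .tau hC hw, hmem⟩
    · exact ⟨ν :: w, .vis hC hν hw, List.mem_cons_of_mem ν hmem⟩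

theorem mem_inames_proj_of_mem_outputs {H : Chor} {r s : Role} {a : AName} (hrs : r ≠ s)
    (h : (a, s) ∈ outputs (proj H r)) : a ∈ inames (proj H s) := by
  induction H with
  | comm b u v =>
    simp only [proj] at h
    split_ifs at h with hru
    · subst hru
      simp only [outputs, Finset.mem_singleton, Prod.mk.injEq] at h
      obtain ⟨rfl, rfl⟩ := h
      simp [proj, inames, Ne.symm hrs]
    all_goals simp [outputs] at h
  | one | zero => simp [proj, outputs] at h
  | star A ih => exact ih h
  | choice A B ihA ihB | seq A B ihA ihB | par A B ihA ihB =>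
    simp only [proj, outputs, inames, Finset.mem_union] at h ⊢
    exact h.imp ihA ihB

theorem TCReach.trans {T : TestLTS} {c₁ c₂ c₃ : Orc × T.S} (h₁ : TCReach T c₁ c₂)
    (h₂ : TCReach T c₂ c₃) : TCReach T c₁ c₃ := by
  induction h₁ with
  | refl => exact h₂
  | step h _ ih => exact .step h (ih h₂)

theorem TCReach.snd_eq_of_stuck {T : TestLTS} {s : T.S}
    (hs : ∀ lab s', T.step s lab s' → lab = .succ) {c c' : Orc × T.S}
    (h : TCReach T c c') (hc : c.2 = s) : c'.2 = s := by
  induction h with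
  | refl => exact hc
  | step h _ ih =>
    apply ih
    cases h with
    | ctau => exact hc
    | ttau ht => subst hc; cases hs _ _ ht
    | sync _ _ ht => subst hc; cases hs _ _ ht

inductive TraceTestStep : List OLabel → TLab → List OLabel → Prop
  | sync (μ : OLabel) (v : List OLabel) : TraceTestStep (μ :: v) (.sync μ) v
  | succ (μ : OLabel) (v : List OLabel) : TraceTestStep (μ :: v) .succ (μ :: v)

def traceTest (w : List OLabel) : TestLTS := ⟨List OLabel, TraceTestStep, w⟩

theorem woTrace_of_tcReach_traceTest {w : List OLabel} {c c' : Orc × (traceTest w).S}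
    (h : TCReach (traceTest w) c c') (hc' : c'.2 = []) : WOTrace c.1 c.2 := by
  induction h with
  | refl c => obtain ⟨C, v⟩ := c; cases hc'; exact .nil C
  | step h _ ih =>
    cases h with
    | ctau hC => exact .tau hC (ih hc')
    | ttau ht => cases ht
    | sync hC hμ ht => cases ht; exact .vis hC hμ (ih hc')

theorem tcReach_traceTest_of_woTrace {w v : List OLabel} {C : Orc} (h : WOTrace C v) :
    ∃ D, TCReach (traceTest w) (C, v) (D, []) := by
  induction h with
  | nil C => exact ⟨C, .refl _⟩
  | tau hC _ ih => obtain ⟨D, hD⟩ := ih; exact ⟨D, .step (.ctau hC) hD⟩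
  | vis hC hμ _ ih => obtain ⟨D, hD⟩ := ih; exact ⟨D, .step (.sync hC hμ (.sync _ _)) hD⟩

theorem shd_traceTest_iff {C : Orc} {w : List OLabel} :
    Shd C (traceTest w) ↔ ¬ WOTrace C w := by
  constructor
  · intro h hw
    obtain ⟨D, hD⟩ := tcReach_traceTest_of_woTrace (w := w) hw
    obtain ⟨c, hc, t, ht⟩ := h _ hD
    have hnil : c.2 = [] := hc.snd_eq_of_stuck (fun _ _ h => by cases h) rfl
    rw [hnil] at ht
    cases ht
  · rintro hw ⟨D, _ | ⟨μ, v⟩⟩ hc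
    · exact absurd (woTrace_of_tcReach_traceTest hc rfl) hw
    · exact ⟨_, .refl _, _, .succ μ v⟩

theorem ShouldPre.woTrace {C' C : Orc} (h : ShouldPre C' C) {w : List OLabel}
    (hw : WOTrace C' w) : WOTrace C w := by
  by_contra hC
  exact shd_traceTest_iff.mp (h _ (shd_traceTest_iff.mpr hC)) hw

theorem canTick_par_iff {P Q : Sys} : CanTick (.par P Q) ↔ CanTick P ∧ CanTick Q := by
  constructor
  · rintro ⟨_, h⟩
    cases h with
    | parL _ hne | parR _ hne => exact absurd rfl hne
    | parTick hP hQ => exact ⟨⟨_, hP⟩, ⟨_, hQ⟩⟩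
  · rintro ⟨⟨_, hP⟩, ⟨_, hQ⟩⟩
    exact ⟨_, .parTick hP hQ⟩

theorem canTick_par_atom_iff {D : Orc} {l : Role} {Q : Sys} :
    CanTick (.par (.atom D l) Q) ↔ (∃ D', OStep D .tick D') ∧ CanTick Q := by
  rw [canTick_par_iff]
  refine and_congr_left' ⟨?_, fun ⟨_, hD⟩ => ⟨_, .atomTick hD⟩⟩
  rintro ⟨_, h⟩
  cases h with
  | atomTick hD => exact ⟨_, hD⟩

theorem CompleteStep.parR {P Q Q' : Sys} (h : CompleteStep Q Q') :
    CompleteStep (.par P Q) (.par P Q') := by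
  rcases h with h | ⟨a, r, s, h⟩
  · exact .inl (.parR h nofun)
  · exact .inr ⟨a, r, s, .parR h nofun⟩

/-- The environment `P` of a contract located at `l`, run as a test that reports success once the
composition has terminated. -/
inductive EnvTestStep (l : Role) : Option Sys → TLab → Option Sys → Prop
  | tau {Q Q' : Sys} : CompleteStep Q Q' → EnvTestStep l (some Q) .tau (some Q')
  | out {Q Q' : Sys} {a : AName} {s : Role} :
      SStep Q (.inp a s) Q' → EnvTestStep l (some Q) (.sync (.out a s)) (some Q')
  | inp {Q Q' : Sys} {a : AName} {r : Role} :
      SStep Q (.out a r l) Q' → EnvTestStep l (some Q) (.sync (.inp a)) (some Q')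
  | tick {Q : Sys} : CanTick Q → EnvTestStep l (some Q) (.sync .tick) none
  | succ : EnvTestStep l none .succ none

def envTest (l : Role) (P : Sys) : TestLTS := ⟨Option Sys, EnvTestStep l, some P⟩

section envTest

variable {l : Role} {P : Sys}

theorem completeStep_of_tcStep_envTest {D D' : Orc} {Q Q' : Sys}
    (h : TCStep (envTest l P) (D, some Q) (D', some Q')) :
    CompleteStep (.par (.atom D l) Q) (.par (.atom D' l) Q') := by
  cases h with
  | ctau hD => exact .inl (.parL (.atomTau hD) nofun)
  | ttau ht => cases ht with | tau hQ => exact hQ.parR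
  | sync hD _ ht =>
    cases ht with
    | out hQ => exact .inr ⟨_, _, _, .commLR (.atomOut hD) hQ⟩
    | inp hQ => exact .inr ⟨_, _, _, .commRL (.atomInp hD) hQ⟩

theorem tcStep_envTest_of_completeStep {D : Orc} {Q R : Sys}
    (h : CompleteStep (.par (.atom D l) Q) R) :
    ∃ D' Q', R = .par (.atom D' l) Q' ∧ TCStep (envTest l P) (D, some Q) (D', some Q') := by
  rcases h with h | ⟨a, r, s, h⟩
  · cases h with
    | parL h _ => cases h with | atomTau hD => exact ⟨_, _, rfl, .ctau hD⟩
    | parR h _ => exact ⟨_, _, rfl, .ttau (.tau (.inl h))⟩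
  · cases h with
    | parL h _ => cases h
    | parR h _ => exact ⟨_, _, rfl, .ttau (.tau (.inr ⟨a, r, s, h⟩))⟩
    | commLR hD hQ => cases hD with | atomOut hD => exact ⟨_, _, rfl, .sync hD nofun (.out hQ)⟩
    | commRL hD hQ => cases hD with | atomInp hD => exact ⟨_, _, rfl, .sync hD nofun (.inp hQ)⟩

theorem exists_tcStep_envTest_none_iff {D : Orc} {Q : Sys} :
    (∃ D', TCStep (envTest l P) (D, some Q) (D', none)) ↔ CanTick (.par (.atom D l) Q) := by
  rw [canTick_par_atom_iff]
  constructor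
  · rintro ⟨_, h⟩
    cases h with
    | ttau ht => cases ht
    | sync hD _ ht => cases ht with | tick hQ => exact ⟨⟨_, hD⟩, hQ⟩
  · rintro ⟨⟨_, hD⟩, hQ⟩
    exact ⟨_, .sync hD nofun (.tick hQ)⟩

theorem tcReach_envTest_of_reach {D : Orc} {Q R : Sys} (h : Reach (.par (.atom D l) Q) R) :
    ∃ D' Q', R = .par (.atom D' l) Q' ∧ TCReach (envTest l P) (D, some Q) (D', some Q') := by
  generalize hX : Sys.par (.atom D l) Q = X at h
  induction h generalizing D Q with
  | refl => exact ⟨D, Q, hX.symm, .refl _⟩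
  | step h _ ih =>
    subst hX
    obtain ⟨D₁, Q₁, rfl, h₁⟩ := tcStep_envTest_of_completeStep (P := P) h
    obtain ⟨D', Q', rfl, h'⟩ := ih rfl
    exact ⟨D', Q', rfl, .step h₁ h'⟩

theorem reach_of_tcReach_envTest {c c' : Orc × (envTest l P).S} (h : TCReach (envTest l P) c c')
    {D : Orc} {Q : Sys} (hc : c = (D, some Q)) :
    (∃ D' Q', c' = (D', some Q') ∧ Reach (.par (.atom D l) Q) (.par (.atom D' l) Q')) ∨
      c'.2 = none ∧ ∃ R, Reach (.par (.atom D l) Q) R ∧ CanTick R := by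
  induction h generalizing D Q with
  | refl => exact .inl ⟨D, Q, hc, .refl _⟩
  | @step _ c₁ _ h₁ h ih =>
    subst hc
    obtain ⟨D₁, _ | Q₁⟩ := c₁
    · refine .inr ⟨h.snd_eq_of_stuck (fun _ _ h => by cases h; rfl) rfl, _, .refl _, ?_⟩
      exact exists_tcStep_envTest_none_iff.mp ⟨_, h₁⟩
    · have hs := completeStep_of_tcStep_envTest h₁
      rcases ih rfl with ⟨D', Q', rfl, hR⟩ | ⟨hnone, R, hR, htick⟩
      · exact .inl ⟨D', Q', rfl, .step hs hR⟩
      · exact .inr ⟨hnone, R, .step hs hR, htick⟩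

theorem shd_envTest_iff {D : Orc} : Shd D (envTest l P) ↔ Correct (.par (.atom D l) P) := by
  constructor
  · intro h R hR
    obtain ⟨D', Q', rfl, hc⟩ := tcReach_envTest_of_reach (P := P) hR
    obtain ⟨c, hc', t, ht⟩ := h _ hc
    rcases reach_of_tcReach_envTest hc' rfl with ⟨_, _, rfl, _⟩ | ⟨-, R', hR', htick⟩
    · cases ht
    · exact ⟨R', hR', htick⟩
  · rintro hP ⟨E, _ | Q⟩ hc
    · exact ⟨_, .refl _, none, .succ⟩
    · rcases reach_of_tcReach_envTest hc rfl with ⟨D', Q', heq, hR⟩ | ⟨hnone, -⟩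
      · cases heq
        obtain ⟨R, hR', htick⟩ := hP _ hR
        obtain ⟨D'', Q'', rfl, hc'⟩ := tcReach_envTest_of_reach (P := P) hR'
        obtain ⟨_, hstep⟩ := exists_tcStep_envTest_none_iff.mpr htick
        exact ⟨_, hc'.trans (.step hstep (.refl _)), none, .succ⟩
      · cases hnone

end envTest

theorem ShouldPre.correct_par_atom {C' C : Orc} (h : ShouldPre C' C) {l : Role} {P : Sys}
    (hC : Correct (.par (.atom C l) P)) : Correct (.par (.atom C' l) P) :=
  shd_envTest_iff.mp (h _ (shd_envTest_iff.mpr hC))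

/-- The environment `P` of a contract located at `l`, run as a test that fails exactly when the
composition has performed the conversation `w` and terminated. -/
inductive TraceEnvTestStep (l : Role) :
    Option (Sys × List (AName × Role × Role)) → TLab →
      Option (Sys × List (AName × Role × Role)) → Prop
  | tau {Q Q' v} : SStep Q .tau Q' → TraceEnvTestStep l (some (Q, v)) .tau (some (Q', v))
  | comm {Q Q' a r s v} : SStep Q (.comm a r s) Q' →
      TraceEnvTestStep l (some (Q, (a, r, s) :: v)) .tau (some (Q', v))
  | out {Q Q' a s v} : SStep Q (.inp a s) Q' →
      TraceEnvTestStep l (some (Q, (a, l, s) :: v)) (.sync (.out a s)) (some (Q', v))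
  | inp {Q Q' a r v} : SStep Q (.out a r l) Q' →
      TraceEnvTestStep l (some (Q, (a, r, l) :: v)) (.sync (.inp a)) (some (Q', v))
  | tick {Q} : CanTick Q → TraceEnvTestStep l (some (Q, [])) (.sync .tick) none
  | succ {x} : TraceEnvTestStep l (some x) .succ (some x)

def traceEnvTest (l : Role) (P : Sys) (w : List (AName × Role × Role)) : TestLTS :=
  ⟨Option (Sys × List (AName × Role × Role)), TraceEnvTestStep l, some (P, w)⟩

section traceEnvTest

variable {l : Role} {P : Sys} {w : List (AName × Role × Role)}

theorem wtrace_of_tcReach_traceEnvTest {c c' : Orc × (traceEnvTest l P w).S}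
    (h : TCReach (traceEnvTest l P w) c c') (hc' : c'.2 = none) {D : Orc} {Q : Sys}
    {v : List (AName × Role × Role)} (hc : c = (D, some (Q, v))) :
    WTrace (.par (.atom D l) Q) v := by
  induction h generalizing D Q v with
  | refl => subst hc; cases hc'
  | step h₁ _ ih =>
    subst hc
    change TCStep _ ((D, some (Q, v)) : Orc × (traceEnvTest l P w).S) _ at h₁
    cases h₁ with
    | ctau hD => exact .tau (.parL (.atomTau hD) nofun) (ih hc' rfl)
    | ttau ht =>
      cases ht with
      | tau hQ => exact .tau (.parR hQ nofun) (ih hc' rfl)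
      | comm hQ => exact .comm (.parR hQ nofun) (ih hc' rfl)
    | sync hD _ ht =>
      cases ht with
      | out hQ => exact .comm (.commLR (.atomOut hD) hQ) (ih hc' rfl)
      | inp hQ => exact .comm (.commRL (.atomInp hD) hQ) (ih hc' rfl)
      | tick hQ => exact .tick (canTick_par_atom_iff.mpr ⟨⟨_, hD⟩, hQ⟩)

theorem tcReach_traceEnvTest_of_wtrace {D : Orc} {Q : Sys} {v : List (AName × Role × Role)}
    (h : WTrace (.par (.atom D l) Q) v) :
    ∃ D', TCReach (traceEnvTest l P w) (D, some (Q, v)) (D', none) := by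
  generalize hX : Sys.par (.atom D l) Q = X at h
  induction h generalizing D Q with
  | tick h =>
    subst hX
    obtain ⟨⟨_, hD⟩, hQ⟩ := canTick_par_atom_iff.mp h
    exact ⟨_, .step (.sync hD nofun (.tick hQ)) (.refl _)⟩
  | tau h _ ih =>
    subst hX
    cases h with
    | parL h _ =>
      cases h with
      | atomTau hD => obtain ⟨_, h'⟩ := ih rfl; exact ⟨_, .step (.ctau hD) h'⟩
    | parR hQ _ => obtain ⟨_, h'⟩ := ih rfl; exact ⟨_, .step (.ttau (.tau hQ)) h'⟩
  | comm h _ ih =>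
    subst hX
    cases h with
    | parL h _ => cases h
    | parR hQ _ => obtain ⟨_, h'⟩ := ih rfl; exact ⟨_, .step (.ttau (.comm hQ)) h'⟩
    | commLR hD hQ =>
      cases hD with
      | atomOut hD => obtain ⟨_, h'⟩ := ih rfl; exact ⟨_, .step (.sync hD nofun (.out hQ)) h'⟩
    | commRL hD hQ =>
      cases hD with
      | atomInp hD => obtain ⟨_, h'⟩ := ih rfl; exact ⟨_, .step (.sync hD nofun (.inp hQ)) h'⟩

theorem shd_traceEnvTest_iff {D : Orc} :
    Shd D (traceEnvTest l P w) ↔ ¬ WTrace (.par (.atom D l) P) w := by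
  constructor
  · intro h hw
    obtain ⟨D', hD'⟩ := tcReach_traceEnvTest_of_wtrace (w := w) hw
    obtain ⟨c, hc, t, ht⟩ := h _ hD'
    have hnone : c.2 = none := hc.snd_eq_of_stuck (fun _ _ h => by cases h) rfl
    rw [hnone] at ht
    cases ht
  · rintro hw ⟨E, _ | x⟩ hc
    · exact absurd (wtrace_of_tcReach_traceEnvTest hc rfl rfl) hw
    · exact ⟨_, .refl _, some x, .succ⟩

end traceEnvTest

theorem ShouldPre.wtrace_par_atom {C' C : Orc} (h : ShouldPre C' C) {l : Role} {P : Sys}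
    {w : List (AName × Role × Role)} (hw : WTrace (.par (.atom C' l) P) w) :
    WTrace (.par (.atom C l) P) w := by
  by_contra hC
  exact shd_traceEnvTest_iff.mp (h _ (shd_traceEnvTest_iff.mpr hC)) hw

structure IsCompleteStepSim (R : Sys → Sys → Prop) : Prop where
  tau {P Q P' : Sys} : R P Q → SStep P .tau P' → ∃ Q', SStep Q .tau Q' ∧ R P' Q'
  comm {P Q P' : Sys} {a : AName} {r s : Role} : R P Q → SStep P (.comm a r s) P' →
    ∃ Q', SStep Q (.comm a r s) Q' ∧ R P' Q'
  canTick {P Q : Sys} : R P Q → CanTick P → CanTick Q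

namespace IsCompleteStepSim

variable {R : Sys → Sys → Prop} {P Q : Sys}

theorem reach (hR : IsCompleteStepSim R) (hPQ : R P Q) {P' : Sys} (h : Reach P P') :
    ∃ Q', Reach Q Q' ∧ R P' Q' := by
  induction h generalizing Q with
  | refl => exact ⟨Q, .refl _, hPQ⟩
  | step h _ ih =>
    obtain ⟨Q₁, hQ₁, hR₁⟩ : ∃ Q₁, CompleteStep Q Q₁ ∧ R _ Q₁ := by
      rcases h with h | ⟨a, r, s, h⟩
      · obtain ⟨Q₁, hQ, hR₁⟩ := hR.tau hPQ h
        exact ⟨Q₁, .inl hQ, hR₁⟩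
      · obtain ⟨Q₁, hQ, hR₁⟩ := hR.comm hPQ h
        exact ⟨Q₁, .inr ⟨a, r, s, hQ⟩, hR₁⟩
    obtain ⟨Q', hQ', hR'⟩ := ih hR₁
    exact ⟨Q', .step hQ₁ hQ', hR'⟩

theorem wtrace (hR : IsCompleteStepSim R) (hPQ : R P Q) {w : List (AName × Role × Role)}
    (h : WTrace P w) : WTrace Q w := by
  induction h generalizing Q with
  | tick h => exact .tick (hR.canTick hPQ h)
  | tau h _ ih =>
    obtain ⟨Q₁, hQ, hR₁⟩ := hR.tau hPQ h
    exact .tau hQ (ih hR₁)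
  | comm h _ ih =>
    obtain ⟨Q₁, hQ, hR₁⟩ := hR.comm hPQ h
    exact .comm hQ (ih hR₁)

theorem correct (hR : IsCompleteStepSim R) (hR' : IsCompleteStepSim (flip R)) (hPQ : R P Q)
    (h : Correct Q) : Correct P := by
  intro P' hP'
  obtain ⟨Q', hQ', hR₁⟩ := hR.reach hPQ hP'
  obtain ⟨Q'', hQ'', htick⟩ := h Q' hQ'
  obtain ⟨P'', hP'', hR₂⟩ := hR'.reach hR₁ hQ''
  exact ⟨P'', hP'', hR'.canTick hR₂ htick⟩

end IsCompleteStepSim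

structure IsSim (R : Sys → Sys → Prop) : Prop where
  step {P Q P' : Sys} {μ : SLabel} : R P Q → μ ≠ .tick → SStep P μ P' →
    ∃ Q', SStep Q μ Q' ∧ R P' Q'
  canTick {P Q : Sys} : R P Q → CanTick P → CanTick Q

namespace IsSim

variable {R S : Sys → Sys → Prop}

theorem isCompleteStepSim (hR : IsSim R) : IsCompleteStepSim R :=
  ⟨fun hPQ h => hR.step hPQ nofun h, fun hPQ h => hR.step hPQ nofun h, hR.canTick⟩

theorem flip_of_symm (hR : IsSim R) (hsymm : ∀ {P Q}, R P Q → R Q P) : IsSim (flip R) :=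
  ⟨fun hPQ hμ h => (hR.step (hsymm hPQ) hμ h).imp fun _ => And.imp_right hsymm,
    fun hPQ => hR.canTick (hsymm hPQ)⟩

theorem or (hR : IsSim R) (hS : IsSim S) : IsSim fun P Q => R P Q ∨ S P Q where
  step := by
    rintro P Q μ P' (hPQ | hPQ) hμ h
    · obtain ⟨Q', hQ, hR'⟩ := hR.step hPQ hμ h; exact ⟨Q', hQ, .inl hR'⟩
    · obtain ⟨Q', hQ, hS'⟩ := hS.step hPQ hμ h; exact ⟨Q', hQ, .inr hS'⟩
  canTick := by
    rintro P Q (hPQ | hPQ)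
    exacts [hR.canTick hPQ, hS.canTick hPQ]

theorem comp (hR : IsSim R) (hS : IsSim S) : IsSim (Relation.Comp R S) where
  step := by
    rintro P Q μ P' ⟨X, hPX, hXQ⟩ hμ h
    obtain ⟨X', hX, hPX'⟩ := hR.step hPX hμ h
    obtain ⟨Q', hQ, hXQ'⟩ := hS.step hXQ hμ hX
    exact ⟨Q', hQ, X', hPX', hXQ'⟩
  canTick := fun ⟨_, hPX, hXQ⟩ h => hS.canTick hXQ (hR.canTick hPX h)

end IsSim

/-- Bisimilarity that matches every non-`√` transition, and `√` only through `CanTick`; the latter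
makes a terminated dummy component `[1]_0` a unit of parallel composition. -/
def Bisimilar (P Q : Sys) : Prop :=
  ∃ R : Sys → Sys → Prop, IsSim R ∧ (∀ {P Q}, R P Q → R Q P) ∧ R P Q

namespace Bisimilar

theorem of_isSim {R : Sys → Sys → Prop} (hR : IsSim R) (hR' : IsSim (flip R)) {P Q : Sys}
    (hPQ : R P Q) : Bisimilar P Q :=
  ⟨_, hR.or hR', Or.symm, .inl hPQ⟩

theorem refl (P : Sys) : Bisimilar P P :=
  ⟨Eq, ⟨fun h _ hs => ⟨_, h ▸ hs, rfl⟩, fun h ht => h ▸ ht⟩, Eq.symm, rfl⟩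

theorem symm {P Q : Sys} : Bisimilar P Q → Bisimilar Q P
  | ⟨R, hR, hsymm, hPQ⟩ => ⟨R, hR, hsymm, hsymm hPQ⟩

theorem trans {P Q X : Sys} : Bisimilar P Q → Bisimilar Q X → Bisimilar P X
  | ⟨_, hR, hRs, hPQ⟩, ⟨_, hS, hSs, hQX⟩ =>
    ⟨_, (hR.comp hS).or (hS.comp hR),
      fun h => h.symm.imp (fun ⟨Y, h₁, h₂⟩ => ⟨Y, hRs h₂, hSs h₁⟩)
        (fun ⟨Y, h₁, h₂⟩ => ⟨Y, hSs h₂, hRs h₁⟩),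
      .inl ⟨Q, hPQ, hQX⟩⟩

theorem par_left {P Q : Sys} (X : Sys) : Bisimilar P Q → Bisimilar (.par X P) (.par X Q)
  | ⟨R, hR, hsymm, hPQ⟩ => by
    refine ⟨fun A B => ∃ X P Q, A = .par X P ∧ B = .par X Q ∧ R P Q, ⟨?_, ?_⟩,
      fun ⟨X, P, Q, hA, hB, h⟩ => ⟨X, Q, P, hB, hA, hsymm h⟩, X, P, Q, rfl, rfl, hPQ⟩
    · rintro _ _ μ _ ⟨X, P, Q, rfl, rfl, hPQ⟩ hμ h
      cases h with
      | parL h hne => exact ⟨_, .parL h hne, _, _, _, rfl, rfl, hPQ⟩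
      | parR h hne =>
        obtain ⟨Q', hQ, hPQ'⟩ := hR.step hPQ hne h
        exact ⟨_, .parR hQ hne, _, _, _, rfl, rfl, hPQ'⟩
      | commLR hX h =>
        obtain ⟨Q', hQ, hPQ'⟩ := hR.step hPQ (by simp) h
        exact ⟨_, .commLR hX hQ, _, _, _, rfl, rfl, hPQ'⟩
      | commRL hX h =>
        obtain ⟨Q', hQ, hPQ'⟩ := hR.step hPQ (by simp) h
        exact ⟨_, .commRL hX hQ, _, _, _, rfl, rfl, hPQ'⟩
      | parTick => exact absurd rfl hμ
    · rintro _ _ ⟨X, P, Q, rfl, rfl, hPQ⟩ h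
      rw [canTick_par_iff] at h ⊢
      exact h.imp_right (hR.canTick hPQ)

theorem par_swap (A B C : Sys) : Bisimilar (.par A (.par B C)) (.par B (.par A C)) := by
  refine ⟨fun X Y => ∃ A B C, X = .par A (.par B C) ∧ Y = .par B (.par A C), ⟨?_, ?_⟩,
    fun ⟨A, B, C, hX, hY⟩ => ⟨B, A, C, hY, hX⟩, A, B, C, rfl, rfl⟩
  · rintro _ _ μ _ ⟨A, B, C, rfl, rfl⟩ hμ h
    cases h with
    | parL hA hne => exact ⟨_, .parR (.parL hA hne) hne, _, _, _, rfl, rfl⟩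
    | parR h hne =>
      cases h with
      | parL hB _ => exact ⟨_, .parL hB hne, _, _, _, rfl, rfl⟩
      | parR hC hne' => exact ⟨_, .parR (.parR hC hne') hne, _, _, _, rfl, rfl⟩
      | commLR hB hC => exact ⟨_, .commLR hB (.parR hC nofun), _, _, _, rfl, rfl⟩
      | commRL hB hC => exact ⟨_, .commRL hB (.parR hC nofun), _, _, _, rfl, rfl⟩
      | parTick => exact absurd rfl hne
    | commLR hA h =>
      cases h with
      | parL hB _ => exact ⟨_, .commRL hB (.parL hA nofun), _, _, _, rfl, rfl⟩
      | parR hC _ => exact ⟨_, .parR (.commLR hA hC) nofun, _, _, _, rfl, rfl⟩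
    | commRL hA h =>
      cases h with
      | parL hB _ => exact ⟨_, .commLR hB (.parL hA nofun), _, _, _, rfl, rfl⟩
      | parR hC _ => exact ⟨_, .parR (.commRL hA hC) nofun, _, _, _, rfl, rfl⟩
    | parTick => exact absurd rfl hμ
  · rintro _ _ ⟨A, B, C, rfl, rfl⟩ h
    simp only [canTick_par_iff] at h ⊢
    tauto

theorem par_unit (A : Sys) : Bisimilar (.par A (.atom .one 0)) A := by
  refine of_isSim (R := fun X Y => X = .par Y (.atom .one 0)) ⟨?_, ?_⟩ ⟨?_, ?_⟩ rfl
  · rintro _ _ μ _ rfl hμ h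
    cases h with
    | parL h _ => exact ⟨_, h, rfl⟩
    | parR h hne => cases h with | atomTick => exact absurd rfl hne | _ h => cases h
    | commLR _ h | commRL _ h => cases h with | _ h => cases h
    | parTick => exact absurd rfl hμ
  · rintro _ _ rfl h
    exact (canTick_par_iff.mp h).1
  · rintro _ _ μ _ rfl hμ h
    exact ⟨_, .parL h hμ, rfl⟩
  · rintro _ _ rfl h
    exact canTick_par_iff.mpr ⟨h, _, .atomTick .one⟩

theorem correct {P Q : Sys} : Bisimilar P Q → Correct P → Correct Q
  | ⟨_, hR, hsymm, hPQ⟩ =>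
    hR.isCompleteStepSim.correct (hR.flip_of_symm hsymm).isCompleteStepSim (hsymm hPQ)

theorem wtrace {P Q : Sys} {w : List (AName × Role × Role)} :
    Bisimilar P Q → WTrace P w → WTrace Q w
  | ⟨_, hR, _, hPQ⟩ => hR.isCompleteStepSim.wtrace hPQ

end Bisimilar

theorem bisimilar_composeC_cons (x : Orc × Role) (L : List (Orc × Role)) :
    Bisimilar (composeC (x :: L)) (.par (.atom x.1 x.2) (composeC L)) := by
  cases L with
  | nil => exact (Bisimilar.par_unit _).symm
  | cons y L => exact .refl _

theorem bisimilar_composeC_middle (x : Orc × Role) (L₁ L₂ : List (Orc × Role)) :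
    Bisimilar (composeC (L₁ ++ x :: L₂)) (.par (.atom x.1 x.2) (composeC (L₁ ++ L₂))) := by
  induction L₁ with
  | nil => exact bisimilar_composeC_cons x L₂
  | cons y L₁ ih =>
    refine (bisimilar_composeC_cons y _).trans (((ih.par_left _).trans ?_).trans
      ((bisimilar_composeC_cons y _).symm.par_left _))
    exact .par_swap _ _ _

theorem composeC_map_of_forall {α : Type*} {Φ : Sys → Prop}
    (hΦ : ∀ {P Q}, Bisimilar P Q → Φ P → Φ Q) {ρ : Orc → Orc → Prop}
    (hρ : ∀ {C C' l E}, ρ C C' → Φ (.par (.atom C l) E) → Φ (.par (.atom C' l) E))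
    {L : List α} {f g : α → Orc × Role} (h : ∀ x ∈ L, ρ (f x).1 (g x).1 ∧ (f x).2 = (g x).2) :
    Φ (composeC (L.map f)) → Φ (composeC (L.map g)) := by
  suffices ∀ L₁, Φ (composeC (L₁ ++ L.map f)) → Φ (composeC (L₁ ++ L.map g)) from this []
  induction L with
  | nil => exact fun _ => id
  | cons x L ih =>
    intro L₁ hL
    obtain ⟨hρx, hx⟩ := h x List.mem_cons_self
    have hgx := hΦ (bisimilar_composeC_middle (g x) L₁ (L.map f)).symm
      (hx ▸ hρ hρx (hΦ (bisimilar_composeC_middle (f x) L₁ (L.map f)) hL))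
    simpa using ih (fun y hy => h y (List.mem_cons_of_mem x hy)) (L₁ ++ [g x])
      (by simpa using hgx)

def SafeOutputs (ok : AName → Role → Prop) (r : Role) (C : Orc) : Prop :=
  ∀ D D' a s, OReach C D → OStep D (.out a s) D' → r ≠ s → ok a s

theorem SafeOutputs.step {ok : AName → Role → Prop} {r : Role} {C C' : Orc} {μ : OLabel}
    (h : SafeOutputs ok r C) (hC : OStep C μ C') : SafeOutputs ok r C' :=
  fun D D' a s hD => h D D' a s (.step hC hD)

/-- `P₀` is `P` with, in each component `[C]_r`, inputs removed on names that are not `ok` for `r`,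
where `ok a s` means that `a` may be sent to `s`; everything the pruned component can ever send to
another role is `ok`. -/
inductive Pruned (ok : AName → Role → Prop) : Sys → Sys → Prop
  | atom {C : Orc} {r : Role} {M : Finset AName} : (∀ a ∈ M, ¬ ok a r) →
      SafeOutputs ok r (restrict C M) → Pruned ok (.atom C r) (.atom (restrict C M) r)
  | par {P Q P₀ Q₀ : Sys} : Pruned ok P P₀ → Pruned ok Q Q₀ →
      Pruned ok (.par P Q) (.par P₀ Q₀)

theorem SStep.rolesList_eq {P P' : Sys} {μ : SLabel} (h : SStep P μ P') :
    rolesList P' = rolesList P := by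
  induction h <;> simp [rolesList, *]

theorem SStep.mem_rolesList_of_inp {P P' : Sys} {a : AName} {s : Role}
    (h : SStep P (.inp a s) P') : s ∈ rolesList P := by
  generalize hμ : SLabel.inp a s = μ at h
  induction h <;> simp_all [rolesList]

namespace Pruned

variable {ok : AName → Role → Prop} {P P₀ : Sys}

theorem ok_of_out (h : Pruned ok P P₀) {P' : Sys} {a : AName} {r s : Role}
    (hP : SStep P (.out a r s) P') (hs : s ∉ rolesList P) : ok a s := by
  generalize hμ : SLabel.out a r s = μ at hP
  induction hP generalizing P₀ with
  | atomOut hC =>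
    cases hμ
    cases h with
    | atom _ hsafe =>
      exact hsafe _ _ _ _ (.refl _) (hC.to_restrict (by simp)) fun hrs =>
        hs (by simp [rolesList, hrs])
  | parL _ _ ih =>
    cases h with | par h _ => exact ih h (fun h' => hs (List.mem_append_left _ h')) hμ
  | parR _ _ ih =>
    cases h with | par _ h => exact ih h (fun h' => hs (List.mem_append_right _ h')) hμ
  | _ => cases hμ

theorem ok_of_comm (h : Pruned ok P P₀) {Q P' Q' : Sys} {a : AName} {r s : Role}
    (hnd : (rolesList P ++ rolesList Q).Nodup) (hP : SStep P (.out a r s) P')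
    (hQ : SStep Q (.inp a s) Q') : ok a s :=
  h.ok_of_out hP fun hs => (List.nodup_append.mp hnd).2.2 _ hs _ hQ.mem_rolesList_of_inp rfl

theorem step (h : Pruned ok P P₀) (hnd : (rolesList P).Nodup) {P' : Sys} {μ : SLabel}
    (hP : SStep P μ P') (hμ : ∀ a s, μ = .inp a s → ok a s) :
    ∃ P₀', SStep P₀ μ P₀' ∧ Pruned ok P' P₀' := by
  induction hP generalizing P₀ with
  | atomTau hC | atomInp hC | atomOut hC | atomTick hC =>
    cases h with
    | @atom _ _ M hM hsafe =>
      have hC₀ := hC.to_restrict (M := M) fun b hb hab => by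
        cases hab <;> exact hM _ hb (hμ _ _ rfl)
      exact ⟨_, by constructor; exact hC₀, .atom hM (hsafe.step hC₀)⟩
  | parL _ hne ih =>
    cases h with
    | par hP hQ =>
      obtain ⟨P₀', hP₀, hP'⟩ := ih hP (List.nodup_append.mp hnd).1 hμ
      exact ⟨_, .parL hP₀ hne, .par hP' hQ⟩
  | parR _ hne ih =>
    cases h with
    | par hP hQ =>
      obtain ⟨Q₀', hQ₀, hQ'⟩ := ih hQ (List.nodup_append.mp hnd).2.1 hμ
      exact ⟨_, .parR hQ₀ hne, .par hP hQ'⟩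
  | commLR hPo hQi ihP ihQ =>
    cases h with
    | par hP hQ =>
      have hok := hP.ok_of_comm hnd hPo hQi
      obtain ⟨P₀', hP₀, hP'⟩ := ihP hP (List.nodup_append.mp hnd).1 (by simp)
      obtain ⟨Q₀', hQ₀, hQ'⟩ := ihQ hQ (List.nodup_append.mp hnd).2.1 (by rintro _ _ ⟨⟩; exact hok)
      exact ⟨_, .commLR hP₀ hQ₀, .par hP' hQ'⟩
  | commRL hPi hQo ihP ihQ =>
    cases h with
    | par hP hQ =>
      have hok := hQ.ok_of_comm (List.nodup_append_comm.mp hnd) hQo hPi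
      obtain ⟨P₀', hP₀, hP'⟩ := ihP hP (List.nodup_append.mp hnd).1 (by rintro _ _ ⟨⟩; exact hok)
      obtain ⟨Q₀', hQ₀, hQ'⟩ := ihQ hQ (List.nodup_append.mp hnd).2.1 (by simp)
      exact ⟨_, .commRL hP₀ hQ₀, .par hP' hQ'⟩
  | parTick _ _ ihP ihQ =>
    cases h with
    | par hP hQ =>
      obtain ⟨P₀', hP₀, hP'⟩ := ihP hP (List.nodup_append.mp hnd).1 (by simp)
      obtain ⟨Q₀', hQ₀, hQ'⟩ := ihQ hQ (List.nodup_append.mp hnd).2.1 (by simp)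
      exact ⟨_, .parTick hP₀ hQ₀, .par hP' hQ'⟩

theorem step_back (h : Pruned ok P P₀) {P₀' : Sys} {μ : SLabel} (hP₀ : SStep P₀ μ P₀') :
    ∃ P', SStep P μ P' ∧ Pruned ok P' P₀' := by
  induction hP₀ generalizing P with
  | atomTau hC | atomInp hC | atomOut hC | atomTick hC =>
    cases h with
    | atom hM hsafe =>
      obtain ⟨C', hC', rfl⟩ := OStep.of_restrict hC
      exact ⟨_, by constructor; exact hC', .atom hM (hsafe.step hC)⟩
  | parL _ hne ih =>
    cases h with
    | par hP hQ => obtain ⟨P', hP', h'⟩ := ih hP; exact ⟨_, .parL hP' hne, .par h' hQ⟩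
  | parR _ hne ih =>
    cases h with
    | par hP hQ => obtain ⟨Q', hQ', h'⟩ := ih hQ; exact ⟨_, .parR hQ' hne, .par hP h'⟩
  | commLR _ _ ihP ihQ | commRL _ _ ihP ihQ | parTick _ _ ihP ihQ =>
    cases h with
    | par hP hQ =>
      obtain ⟨P', hP', h₁⟩ := ihP hP
      obtain ⟨Q', hQ', h₂⟩ := ihQ hQ
      refine ⟨_, ?_, .par h₁ h₂⟩
      first | exact .commLR hP' hQ' | exact .commRL hP' hQ' | exact .parTick hP' hQ'

theorem isCompleteStepSim : IsCompleteStepSim fun P P₀ => Pruned ok P P₀ ∧ (rolesList P).Nodup where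
  tau := fun ⟨h, hnd⟩ hP =>
    (h.step hnd hP nofun).imp fun _ => And.imp_right fun h' => ⟨h', hP.rolesList_eq ▸ hnd⟩
  comm := fun ⟨h, hnd⟩ hP =>
    (h.step hnd hP nofun).imp fun _ => And.imp_right fun h' => ⟨h', hP.rolesList_eq ▸ hnd⟩
  canTick := fun ⟨h, hnd⟩ ⟨_, hP⟩ =>
    let ⟨_, hP₀, _⟩ := h.step hnd hP nofun
    ⟨_, hP₀⟩

theorem isCompleteStepSim_flip :
    IsCompleteStepSim (flip fun P P₀ => Pruned ok P P₀ ∧ (rolesList P).Nodup) where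
  tau := fun ⟨h, hnd⟩ hP₀ =>
    let ⟨_, hP, h'⟩ := h.step_back hP₀
    ⟨_, hP, h', hP.rolesList_eq ▸ hnd⟩
  comm := fun ⟨h, hnd⟩ hP₀ =>
    let ⟨_, hP, h'⟩ := h.step_back hP₀
    ⟨_, hP, h', hP.rolesList_eq ▸ hnd⟩
  canTick := fun ⟨h, _⟩ ⟨_, hP₀⟩ =>
    let ⟨_, hP, _⟩ := h.step_back hP₀
    ⟨_, hP⟩

theorem correct (h : Pruned ok P P₀) (hnd : (rolesList P).Nodup) (hP₀ : Correct P₀) :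
    Correct P :=
  isCompleteStepSim.correct isCompleteStepSim_flip ⟨h, hnd⟩ hP₀

theorem wtrace (h : Pruned ok P P₀) (hnd : (rolesList P).Nodup)
    {w : List (AName × Role × Role)} (hP : WTrace P w) : WTrace P₀ w :=
  isCompleteStepSim.wtrace ⟨h, hnd⟩ hP

end Pruned

def pruneInputs (H : Chor) (r : Role) (C : Orc) : Orc :=
  restrict C (inames C \ inames (proj H r))

theorem consonant_proj (H : Chor) (r : Role) : Consonant (proj H r) r H := by
  simp only [Consonant, NF, Finset.sdiff_self, restrict_empty]
  exact fun _ => id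

theorem Consonant.pruned {C : Orc} {r : Role} {H : Chor} (h : Consonant C r H) :
    Pruned (fun a s => a ∈ inames (proj H s)) (.atom C r) (.atom (pruneInputs H r C) r) := by
  refine .atom (fun a ha => (Finset.mem_sdiff.mp ha).2) ?_
  intro D D' a s hD hstep hrs
  obtain ⟨w, hw, hmem⟩ := hD.exists_woTrace_mem hstep nofun
  exact mem_inames_proj_of_mem_outputs hrs ((ShouldPre.woTrace h hw).mem_outputs hmem)

theorem pruned_composeC {ok : AName → Role → Prop} {f : Orc × Role → Orc} :
    ∀ {L : List (Orc × Role)}, L ≠ [] → (∀ x ∈ L, Pruned ok (.atom x.1 x.2) (.atom (f x) x.2)) →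
      Pruned ok (composeC L) (composeC (L.map fun x => (f x, x.2)))
  | [x], _, h => h x (List.mem_singleton_self x)
  | x :: y :: L, _, h =>
    .par (h x List.mem_cons_self)
      (pruned_composeC (List.cons_ne_nil y L) fun z hz => h z (List.mem_cons_of_mem x hz))

theorem rolesList_composeC : ∀ {L : List (Orc × Role)}, L ≠ [] →
    rolesList (composeC L) = L.map Prod.snd
  | [_], _ => rfl
  | x :: y :: L, _ => congrArg (x.2 :: ·) (rolesList_composeC (List.cons_ne_nil y L))

/-- Given a well-formed choreography `H`, testing consonance
is a conformance relation; in particular every projection of `H` is consonant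
with its own role. -/
theorem consonance_is_conformance (H : Chor) (hH : WellFormed H) :
    (∀ r ∈ rolesC H, Consonant (proj H r) r H) ∧
    ConformanceRel (fun C r => Consonant C r H) H := by
  refine ⟨fun r _ => consonant_proj H r, fun r _ => ⟨proj H r, consonant_proj H r⟩, ?_⟩
  intro L hne hnd hroles hcons
  have hproj : Implements (composeC (L.map fun x => (proj H x.2, x.2))) H := by
    simpa [List.map_map, Function.comp_def] using hH _ hnd hroles
  have hpruned := pruned_composeC hne fun x hx => (hcons x hx).pruned
  have hnd' : (rolesList (composeC L)).Nodup := by rwa [rolesList_composeC hne]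
  refine ⟨hpruned.correct hnd' ?_, fun w hw => hproj.2 w ?_⟩
  · refine composeC_map_of_forall (ρ := flip ShouldPre) Bisimilar.correct
      (fun h => ShouldPre.correct_par_atom h) ?_ hproj.1
    exact fun x hx => ⟨hcons x hx, rfl⟩
  · refine composeC_map_of_forall (Φ := (WTrace · w)) (ρ := ShouldPre) Bisimilar.wtrace
      (fun h => ShouldPre.wtrace_par_atom h) ?_ (hpruned.wtrace hnd' hw)
    exact fun x hx => ⟨hcons x hx, rfl⟩
end

section
/- There is no maximal conformance relation. Concretely, for the well-formed choreography H = a_{r→s} | b_{r→s}: (i) there is a conformance relation ⊲¹ with (τ;ā_s | τ;b̄_s) ⊲¹_r H and (τ;a;b + τ;b;a) ⊲¹_s H; (ii) there is a conformance relation ⊲² with (τ;ā_s;τ;b̄_s + τ;b̄_s;τ;ā_s) ⊲²_r H and (a | b) ⊲²_s H; but (iii) the system [τ;ā_s;τ;b̄_s + τ;b̄_s;τ;ā_s]_r || [τ;a;b + τ;b;a]_s is not a correct composition, so no conformance relation contains the union of ⊲¹ and ⊲². -/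
/-- `τ;ā_s | τ;b̄_s` -/
def par_r (a b : AName) (s : Role) : Orc :=
  .par (.seq .tau (.out a s)) (.seq .tau (.out b s))

/-- `τ;a;b + τ;b;a` -/
def seq_s (a b : AName) : Orc :=
  .choice (.seq .tau (.seq (.inp a) (.inp b))) (.seq .tau (.seq (.inp b) (.inp a)))

/-- `τ;ā_s;τ;b̄_s + τ;b̄_s;τ;ā_s` -/
def seq_r (a b : AName) (s : Role) : Orc :=
  .choice (.seq .tau (.seq (.out a s) (.seq .tau (.out b s))))
          (.seq .tau (.seq (.out b s) (.seq .tau (.out a s))))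

/-- `a | b` -/
def par_s (a b : AName) : Orc := .par (.inp a) (.inp b)

/-!
All four claims are facts about finite, acyclic state spaces. Renaming names and roles along
bijections of `ℕ`, and swapping the two parties of a composition, map steps to steps; hence they
preserve correctness and transport conversations, and it suffices to treat `a = r = 0`,
`b = s = 1`, where the reachable states are explored exhaustively by a verified enumeration.
A relation pairing one contract with each of the two roles is a conformance relation as soon as
that single two-party system implements `H`. The union of `⊲¹` and `⊲²` fails because
`[τ;ā_s;τ;b̄_s + τ;b̄_s;τ;ā_s]_r || [τ;a;b + τ;b;a]_s` can commit `r` to sending `a` first and `s`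
to receiving `b` first.
-/

namespace Orc

def steps : Orc → List (OLabel × Orc)
  | zero => []
  | one => [(.tick, zero)]
  | tau => [(.tau, one)]
  | inp a => [(.inp a, one)]
  | out a l => [(.out a l, one)]
  | choice C D => C.steps ++ D.steps
  | seq C D => C.steps.flatMap fun x => if x.1 = .tick then D.steps else [(x.1, seq x.2 D)]
  | par C D =>
      C.steps.flatMap (fun x => if x.1 = .tick then [] else [(x.1, par x.2 D)]) ++
      D.steps.flatMap (fun y => if y.1 = .tick then [] else [(y.1, par C y.2)]) ++
      C.steps.flatMap fun x => D.steps.flatMap fun y =>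
        if x.1 = .tick ∧ y.1 = .tick then [(.tick, par x.2 y.2)] else []
  | star C => (.tick, zero) ::
      C.steps.flatMap fun x => if x.1 = .tick then [] else [(x.1, seq x.2 (star C))]

theorem mem_steps {C C' : Orc} {μ : OLabel} : (μ, C') ∈ C.steps ↔ OStep C μ C' := by
  constructor
  · induction C generalizing μ C' with
    | choice C D ihC ihD =>
      simp only [steps, List.mem_append]
      rintro (h | h)
      exacts [.choiceL (ihC h), .choiceR (ihD h)]
    | seq C D ihC ihD =>
      simp only [steps, List.mem_flatMap, Prod.exists]
      rintro ⟨ν, C₁, h₁, h⟩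
      split_ifs at h with hν
      · exact .seqTick (hν ▸ ihC h₁) (ihD h)
      · simp only [List.mem_singleton, Prod.mk.injEq] at h
        obtain ⟨rfl, rfl⟩ := h
        exact .seqL (ihC h₁) hν
    | par C D ihC ihD =>
      simp only [steps, List.mem_append, List.mem_flatMap, Prod.exists]
      rintro ((⟨ν, C₁, h₁, h⟩ | ⟨ν, D₁, h₁, h⟩) | ⟨ν, C₁, h₁, ν', D₁, h₂, h⟩) <;>
        split_ifs at h with hν <;>
        simp only [List.mem_singleton, Prod.mk.injEq, List.not_mem_nil] at h <;>
        obtain ⟨rfl, rfl⟩ := h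
      · exact .parL (ihC h₁) hν
      · exact .parR (ihD h₁) hν
      · exact .parTick (hν.1 ▸ ihC h₁) (hν.2 ▸ ihD h₂)
    | star C ih =>
      simp only [steps, List.mem_cons, Prod.mk.injEq, List.mem_flatMap, Prod.exists]
      rintro (⟨rfl, rfl⟩ | ⟨ν, C₁, h₁, h⟩)
      · exact .starTick
      · split_ifs at h with hν <;>
          simp only [List.mem_singleton, Prod.mk.injEq, List.not_mem_nil] at h
        obtain ⟨rfl, rfl⟩ := h
        exact .starStep (ih h₁) hν
    | _ => simp +contextual [steps, OStep.one, OStep.tau, OStep.inp, OStep.out]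
  · intro h
    induction h with
    | choiceL _ ih | choiceR _ ih => simp [steps, ih]
    | seqL _ hμ ih => simpa [steps] using ⟨_, _, ih, by simp [hμ]⟩
    | parL _ hμ ih | parR _ hμ ih | starStep _ hμ ih => simp [steps, ih, hμ]
    | seqTick _ _ ih₁ ih₂ => simpa [steps] using ⟨_, _, ih₁, by simpa using ih₂⟩
    | parTick _ _ ih₁ ih₂ => simp [steps, ih₁, ih₂]
    | _ => simp [steps]

end Orc

def OLabel.locate (r : Role) : OLabel → SLabel
  | .tau => .tau
  | .inp a => .inp a r
  | .out a s => .out a r s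
  | .tick => .tick

def SLabel.sync : SLabel → SLabel → List SLabel
  | .tick, .tick => [.tick]
  | .out a r s, .inp a' s' => if a = a' ∧ s = s' then [.comm a r s] else []
  | .inp a' s', .out a r s => if a = a' ∧ s = s' then [.comm a r s] else []
  | _, _ => []

theorem SLabel.mem_sync {μ ν ν' : SLabel} : μ ∈ ν.sync ν' ↔
    (ν = .tick ∧ ν' = .tick ∧ μ = .tick) ∨
    (∃ a r s, ν = .out a r s ∧ ν' = .inp a s ∧ μ = .comm a r s) ∨
    (∃ a r s, ν = .inp a s ∧ ν' = .out a r s ∧ μ = .comm a r s) := by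
  cases ν <;> cases ν' <;> simp [sync] <;> grind

namespace Sys

def steps : Sys → List (SLabel × Sys)
  | atom C r => C.steps.map fun x => (x.1.locate r, atom x.2 r)
  | par P Q =>
      P.steps.flatMap (fun x => if x.1 = .tick then [] else [(x.1, par x.2 Q)]) ++
      Q.steps.flatMap (fun y => if y.1 = .tick then [] else [(y.1, par P y.2)]) ++
      P.steps.flatMap fun x => Q.steps.flatMap fun y =>
        (x.1.sync y.1).map fun μ => (μ, par x.2 y.2)

theorem mem_steps {P P' : Sys} {μ : SLabel} : (μ, P') ∈ P.steps ↔ SStep P μ P' := by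
  constructor
  · induction P generalizing μ P' with
    | atom C r =>
      simp only [steps, List.mem_map, Prod.mk.injEq, Prod.exists]
      rintro ⟨ν, C', h, rfl, rfl⟩
      have h := Orc.mem_steps.1 h
      cases ν
      exacts [.atomTau h, .atomInp h, .atomOut h, .atomTick h]
    | par P Q ihP ihQ =>
      simp only [steps, List.mem_append, List.mem_flatMap, List.mem_map, Prod.exists]
      rintro ((⟨ν, P₁, h₁, h⟩ | ⟨ν, Q₁, h₁, h⟩) | ⟨ν, P₁, h₁, ν', Q₁, h₂, μ', hμ, h⟩)
      · split_ifs at h with hν <;>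
          simp only [List.mem_singleton, Prod.mk.injEq, List.not_mem_nil] at h
        obtain ⟨rfl, rfl⟩ := h
        exact .parL (ihP h₁) hν
      · split_ifs at h with hν <;>
          simp only [List.mem_singleton, Prod.mk.injEq, List.not_mem_nil] at h
        obtain ⟨rfl, rfl⟩ := h
        exact .parR (ihQ h₁) hν
      · simp only [Prod.mk.injEq] at h
        obtain ⟨rfl, rfl⟩ := h
        have h₁ := ihP h₁
        have h₂ := ihQ h₂
        rcases SLabel.mem_sync.1 hμ with ⟨rfl, rfl, rfl⟩ | ⟨a, r, s, rfl, rfl, rfl⟩ |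
          ⟨a, r, s, rfl, rfl, rfl⟩
        exacts [.parTick h₁ h₂, .commLR h₁ h₂, .commRL h₁ h₂]
  · intro h
    induction h with
    | atomTau h | atomInp h | atomOut h | atomTick h =>
      exact List.mem_map.2 ⟨_, Orc.mem_steps.2 h, rfl⟩
    | parL _ hμ ih | parR _ hμ ih => simp [steps, ih, hμ]
    | commLR _ _ ih₁ ih₂ | commRL _ _ ih₁ ih₂ | parTick _ _ ih₁ ih₂ =>
      simp only [steps, List.mem_append, List.mem_flatMap, List.mem_map]
      exact .inr ⟨_, ih₁, _, ih₂, _, by simp [SLabel.sync], rfl⟩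

def completeSuccs (P : Sys) : List Sys :=
  P.steps.filterMap fun x => match x.1 with
    | .tau | .comm .. => some x.2
    | _ => none

theorem mem_completeSuccs {P Q : Sys} : Q ∈ P.completeSuccs ↔ CompleteStep P Q := by
  simp only [completeSuccs, List.mem_filterMap, Prod.exists, CompleteStep]
  constructor
  · rintro ⟨μ, P', h, hQ⟩
    cases μ <;> simp only [Option.some.injEq, reduceCtorEq] at hQ <;> subst hQ
    exacts [.inl (mem_steps.1 h), .inr ⟨_, _, _, mem_steps.1 h⟩]
  · rintro (h | ⟨a, r, s, h⟩)
    exacts [⟨_, _, mem_steps.2 h, rfl⟩, ⟨_, _, mem_steps.2 h, rfl⟩]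

def canTickB (P : Sys) : Bool := P.steps.any (·.1 = .tick)

theorem canTickB_iff {P : Sys} : P.canTickB ↔ CanTick P := by
  simp [canTickB, CanTick, mem_steps]

/-- `allReachB p n P`: `p` holds at every state reachable from `P`, and no run of `P` has more
than `n` complete steps. -/
def allReachB (p : Sys → Bool) : ℕ → Sys → Bool
  | 0, P => p P && P.completeSuccs.isEmpty
  | n + 1, P => p P && P.completeSuccs.all (allReachB p n)

theorem allReachB_self {p : Sys → Bool} {n : ℕ} {P : Sys} (h : allReachB p n P) : p P := by
  cases n <;> simp_all [allReachB]

theorem allReachB_of_completeStep {p : Sys → Bool} {n : ℕ} {P Q : Sys}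
    (hP : allReachB p n P) (h : CompleteStep P Q) : ∃ m, n = m + 1 ∧ allReachB p m Q := by
  have hQ := mem_completeSuccs.2 h
  cases n with
  | zero => simp_all [allReachB]
  | succ m =>
    simp only [allReachB, Bool.and_eq_true, List.all_eq_true] at hP
    exact ⟨m, rfl, hP.2 Q hQ⟩

theorem allReachB_of_reach {p : Sys → Bool} {n : ℕ} {P Q : Sys}
    (hP : allReachB p n P) (h : Reach P Q) : p Q := by
  induction h generalizing n with
  | refl => exact allReachB_self hP
  | step hs _ ih =>
    obtain ⟨m, -, hm⟩ := allReachB_of_completeStep hP hs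
    exact ih hm

def reachesTickB : ℕ → Sys → Bool
  | 0, P => P.canTickB
  | n + 1, P => P.canTickB || P.completeSuccs.any (reachesTickB n)

theorem exists_reach_canTick {n : ℕ} {P : Sys} (h : reachesTickB n P) :
    ∃ Q, Reach P Q ∧ CanTick Q := by
  induction n generalizing P with
  | zero => exact ⟨P, .refl P, canTickB_iff.1 h⟩
  | succ n ih =>
    simp only [reachesTickB, Bool.or_eq_true, List.any_eq_true] at h
    rcases h with h | ⟨P', hP', h⟩
    · exact ⟨P, .refl P, canTickB_iff.1 h⟩
    · obtain ⟨Q, hQ, hQt⟩ := ih h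
      exact ⟨Q, .step (mem_completeSuccs.1 hP') hQ, hQt⟩

def weakTraces : ℕ → Sys → List (List (AName × Role × Role))
  | 0, P => if P.canTickB then [[]] else []
  | n + 1, P => (if P.canTickB then [[]] else []) ++ P.steps.flatMap fun x => match x.1 with
      | .tau => weakTraces n x.2
      | .comm a r s => (weakTraces n x.2).map ((a, r, s) :: ·)
      | _ => []

theorem mem_weakTraces {p : Sys → Bool} {n : ℕ} {P : Sys} {w : List (AName × Role × Role)}
    (hP : allReachB p n P) (hw : WTrace P w) : w ∈ weakTraces n P := by
  induction hw generalizing n with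
  | tick h => cases n <;> simp [weakTraces, canTickB_iff.2 h]
  | tau h _ ih =>
    obtain ⟨m, rfl, hm⟩ := allReachB_of_completeStep hP (.inl h)
    simp only [weakTraces, List.mem_append, List.mem_flatMap]
    exact .inr ⟨_, mem_steps.2 h, ih hm⟩
  | comm h _ ih =>
    obtain ⟨m, rfl, hm⟩ := allReachB_of_completeStep hP (.inr ⟨_, _, _, h⟩)
    simp only [weakTraces, List.mem_append, List.mem_flatMap]
    exact .inr ⟨_, mem_steps.2 h, List.mem_map_of_mem (ih hm)⟩

theorem correct_of_allReachB {m n : ℕ} {P : Sys} (h : allReachB (reachesTickB m) n P) :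
    Correct P :=
  fun _ hQ => exists_reach_canTick (allReachB_of_reach h hQ)

theorem not_correct_of_reach_allReachB {n : ℕ} {P B : Sys} (hB : Reach P B)
    (h : allReachB (fun Q => !Q.canTickB) n B) : ¬ Correct P := by
  intro hP
  obtain ⟨Q, hQ, hQt⟩ := hP B hB
  simpa [canTickB_iff.2 hQt] using allReachB_of_reach h hQ

theorem implements_of_allReachB {m n : ℕ} {P : Sys} {H : Chor}
    (hP : allReachB (reachesTickB m) n P) (hH : ∀ w ∈ weakTraces n P, CTrace H w) :
    Implements P H :=
  ⟨correct_of_allReachB hP, fun w hw => hH w (mem_weakTraces hP hw)⟩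

end Sys

structure StepHom where
  toFun : Sys → Sys
  nameMap : AName → AName
  roleMap : Role → Role
  map_tau {P P' : Sys} : SStep P .tau P' → SStep (toFun P) .tau (toFun P')
  map_tick {P P' : Sys} : SStep P .tick P' → SStep (toFun P) .tick (toFun P')
  map_comm {P P' : Sys} {a : AName} {r s : Role} : SStep P (.comm a r s) P' →
    SStep (toFun P) (.comm (nameMap a) (roleMap r) (roleMap s)) (toFun P')

namespace StepHom

variable (φ : StepHom)

def traceMap : AName × Role × Role → AName × Role × Role :=
  Prod.map φ.nameMap (Prod.map φ.roleMap φ.roleMap)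

theorem reach {P Q : Sys} (h : Reach P Q) : Reach (φ.toFun P) (φ.toFun Q) := by
  induction h with
  | refl => exact .refl _
  | step hs _ ih =>
    refine .step ?_ ih
    rcases hs with hs | ⟨a, r, s, hs⟩
    exacts [.inl (φ.map_tau hs), .inr ⟨_, _, _, φ.map_comm hs⟩]

theorem canTick {P : Sys} (h : CanTick P) : CanTick (φ.toFun P) :=
  let ⟨_, h⟩ := h; ⟨_, φ.map_tick h⟩

theorem wtrace {P : Sys} {w : List (AName × Role × Role)} (h : WTrace P w) :
    WTrace (φ.toFun P) (w.map φ.traceMap) := by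
  induction h with
  | tick h => exact .tick (φ.canTick h)
  | tau h _ ih => exact .tau (φ.map_tau h) ih
  | comm h _ ih => exact .comm (φ.map_comm h) ih

theorem correct_of_leftInverse (ψ : StepHom) (hψ : ∀ P, ψ.toFun (φ.toFun P) = P) {P : Sys}
    (h : Correct (φ.toFun P)) : Correct P := by
  intro P' hP'
  obtain ⟨Q, hQ, hQt⟩ := h _ (φ.reach hP')
  exact ⟨ψ.toFun Q, hψ P' ▸ ψ.reach hQ, ψ.canTick hQt⟩

theorem implements_of_leftInverse (ψ : StepHom) (hψ : ∀ P, ψ.toFun (φ.toFun P) = P)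
    {P : Sys} {H H' : Chor} (hH : ∀ w, CTrace H' (w.map φ.traceMap) → CTrace H w)
    (h : Implements (φ.toFun P) H') : Implements P H :=
  ⟨φ.correct_of_leftInverse ψ hψ h.1, fun _ hw => hH _ (h.2 _ (φ.wtrace hw))⟩

end StepHom

def Sys.swap : Sys → Sys
  | .par P Q => .par Q P
  | P => P

theorem SStep.swap {P P' : Sys} {μ : SLabel} (h : SStep P μ P') : SStep P.swap μ P'.swap := by
  cases h with
  | atomTau h => exact .atomTau h
  | atomInp h => exact .atomInp h
  | atomOut h => exact .atomOut h
  | atomTick h => exact .atomTick h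
  | parL h hμ => exact .parR h hμ
  | parR h hμ => exact .parL h hμ
  | commLR h₁ h₂ => exact .commRL h₂ h₁
  | commRL h₁ h₂ => exact .commLR h₂ h₁
  | parTick h₁ h₂ => exact .parTick h₂ h₁

def StepHom.swap : StepHom := ⟨Sys.swap, id, id, SStep.swap, SStep.swap, SStep.swap⟩

theorem Implements.par_comm {P Q : Sys} {H : Chor} (h : Implements (.par P Q) H) :
    Implements (.par Q P) H :=
  StepHom.swap.implements_of_leftInverse StepHom.swap (by rintro (_ | _) <;> rfl)
    (by simp [StepHom.traceMap, StepHom.swap]) h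

section Rename

variable (f : AName → AName) (g : Role → Role)

def Orc.rename : Orc → Orc
  | .inp a => .inp (f a)
  | .out a l => .out (f a) (g l)
  | .seq C D => .seq C.rename D.rename
  | .choice C D => .choice C.rename D.rename
  | .par C D => .par C.rename D.rename
  | .star C => .star C.rename
  | C => C

def OLabel.rename : OLabel → OLabel
  | .inp a => .inp (f a)
  | .out a l => .out (f a) (g l)
  | μ => μ

def Sys.rename : Sys → Sys
  | .atom C r => .atom (C.rename f g) (g r)
  | .par P Q => .par P.rename Q.rename

def SLabel.rename : SLabel → SLabel
  | .inp a s => .inp (f a) (g s)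
  | .out a r s => .out (f a) (g r) (g s)
  | .comm a r s => .comm (f a) (g r) (g s)
  | μ => μ

def Chor.rename : Chor → Chor
  | .comm a r s => .comm (f a) (g r) (g s)
  | .choice H L => .choice H.rename L.rename
  | .seq H L => .seq H.rename L.rename
  | .par H L => .par H.rename L.rename
  | .star H => .star H.rename
  | H => H

def CLabel.rename : CLabel → CLabel
  | .comm a r s => .comm (f a) (g r) (g s)
  | .tick => .tick

variable {f g}

theorem OStep.rename {C C' : Orc} {μ : OLabel} (h : OStep C μ C') :
    OStep (C.rename f g) (μ.rename f g) (C'.rename f g) := by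
  have ne_tick {μ : OLabel} (hμ : μ ≠ .tick) : μ.rename f g ≠ .tick := by
    cases μ <;> simp_all [OLabel.rename]
  induction h with
  | choiceL _ ih => exact .choiceL ih
  | choiceR _ ih => exact .choiceR ih
  | seqL _ hμ ih => exact .seqL ih (ne_tick hμ)
  | seqTick _ _ ih₁ ih₂ => exact .seqTick ih₁ ih₂
  | parL _ hμ ih => exact .parL ih (ne_tick hμ)
  | parR _ hμ ih => exact .parR ih (ne_tick hμ)
  | parTick _ _ ih₁ ih₂ => exact .parTick ih₁ ih₂
  | starStep _ hμ ih => exact .starStep ih (ne_tick hμ)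
  | _ => constructor

theorem SStep.rename {P P' : Sys} {μ : SLabel} (h : SStep P μ P') :
    SStep (P.rename f g) (μ.rename f g) (P'.rename f g) := by
  have ne_tick {μ : SLabel} (hμ : μ ≠ .tick) : μ.rename f g ≠ .tick := by
    cases μ <;> simp_all [SLabel.rename]
  induction h with
  | atomTau h => exact .atomTau h.rename
  | atomInp h => exact .atomInp h.rename
  | atomOut h => exact .atomOut h.rename
  | atomTick h => exact .atomTick h.rename
  | parL _ hμ ih => exact .parL ih (ne_tick hμ)
  | parR _ hμ ih => exact .parR ih (ne_tick hμ)
  | commLR _ _ ih₁ ih₂ => exact .commLR ih₁ ih₂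
  | commRL _ _ ih₁ ih₂ => exact .commRL ih₁ ih₂
  | parTick _ _ ih₁ ih₂ => exact .parTick ih₁ ih₂

theorem CStep.rename {H H' : Chor} {η : CLabel} (h : CStep H η H') :
    CStep (H.rename f g) (η.rename f g) (H'.rename f g) := by
  have ne_tick {η : CLabel} (hη : η ≠ .tick) : η.rename f g ≠ .tick := by
    cases η <;> simp_all [CLabel.rename]
  induction h with
  | choiceL _ ih => exact .choiceL ih
  | choiceR _ ih => exact .choiceR ih
  | seqL _ hη ih => exact .seqL ih (ne_tick hη)
  | seqTick _ _ ih₁ ih₂ => exact .seqTick ih₁ ih₂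
  | parL _ hη ih => exact .parL ih (ne_tick hη)
  | parR _ hη ih => exact .parR ih (ne_tick hη)
  | parTick _ _ ih₁ ih₂ => exact .parTick ih₁ ih₂
  | starStep _ hη ih => exact .starStep ih (ne_tick hη)
  | _ => constructor

theorem CTrace.rename {H : Chor} {w : List (AName × Role × Role)} (h : CTrace H w) :
    CTrace (H.rename f g) (w.map (Prod.map f (Prod.map g g))) := by
  induction h with
  | tick h => exact .tick h.rename
  | comm h _ ih => exact .comm h.rename ih

variable {f' : AName → AName} {g' : Role → Role}

theorem Orc.rename_rename (hf : f'.LeftInverse f) (hg : g'.LeftInverse g) (C : Orc) :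
    (C.rename f g).rename f' g' = C := by
  induction C <;> simp_all [Orc.rename, hf _, hg _]

theorem Sys.rename_rename (hf : f'.LeftInverse f) (hg : g'.LeftInverse g) (P : Sys) :
    (P.rename f g).rename f' g' = P := by
  induction P <;> simp_all [Sys.rename, Orc.rename_rename hf hg, hg _]

def StepHom.rename (f : AName → AName) (g : Role → Role) : StepHom :=
  ⟨Sys.rename f g, f, g, SStep.rename, SStep.rename, SStep.rename⟩

end Rename

theorem Correct.of_rename (f g : ℕ ≃ ℕ) {P : Sys} (h : Correct (P.rename f g)) : Correct P :=
  (StepHom.rename f g).correct_of_leftInverse (.rename f.symm g.symm)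
    (Sys.rename_rename f.leftInverse_symm g.leftInverse_symm) h

theorem Implements.rename (f g : ℕ ≃ ℕ) {P : Sys} {H : Chor} (h : Implements P H) :
    Implements (P.rename f g) (H.rename f g) := by
  refine (StepHom.rename f.symm g.symm).implements_of_leftInverse (.rename f g)
    (Sys.rename_rename f.rightInverse_symm g.rightInverse_symm) (fun w hw => ?_)
    (show Implements ((P.rename f g).rename f.symm g.symm) H by
      rwa [Sys.rename_rename f.leftInverse_symm g.leftInverse_symm])
  simpa [StepHom.traceMap, StepHom.rename, List.map_map, Prod.map_comp_map] using
    hw.rename (f := f) (g := g)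

theorem exists_equiv_apply_zero_apply_one {x y : ℕ} (h : x ≠ y) :
    ∃ e : ℕ ≃ ℕ, e 0 = x ∧ e 1 = y := by
  set e := Equiv.swap 0 x
  have he : e 1 ≠ x := fun h' =>
    one_ne_zero (e.injective (h'.trans (Equiv.swap_apply_left 0 x).symm))
  refine ⟨e.trans (Equiv.swap (e 1) y), ?_, by simp⟩
  simp [e, Equiv.swap_apply_of_ne_of_ne he.symm h]

theorem eq_pair_or_eq_pair_of_toFinset_eq {α : Type*} [DecidableEq α] {x y : α} (hxy : x ≠ y)
    {L : List α} (hL : L.Nodup) (h : L.toFinset = {x, y}) : L = [x, y] ∨ L = [y, x] :=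
  List.perm_pair.1 (List.perm_of_nodup_nodup_toFinset_eq hL (by simp [hxy]) (by simp [h]))

section TwoRoles

variable {H : Chor} {r s : Role}

theorem wellFormed_of_rolesC_eq_pair (hrs : r ≠ s) (hroles : rolesC H = {r, s})
    (h : Implements (.par (.atom (proj H r) r) (.atom (proj H s) s)) H) : WellFormed H := by
  intro L hL hLH
  rcases eq_pair_or_eq_pair_of_toFinset_eq hrs hL (hLH.trans hroles) with rfl | rfl
  exacts [h, h.par_comm]

theorem conformanceRel_pair (hrs : r ≠ s) (hroles : rolesC H = {r, s}) {Cr Cs : Orc}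
    (h : Implements (.par (.atom Cr r) (.atom Cs s)) H) :
    ConformanceRel (fun C t => (C = Cr ∧ t = r) ∨ (C = Cs ∧ t = s)) H := by
  refine ⟨fun t ht => ?_, fun L _ hL hLH hR => ?_⟩
  · rw [hroles, Finset.mem_insert, Finset.mem_singleton] at ht
    rcases ht with rfl | rfl
    exacts [⟨Cr, .inl ⟨rfl, rfl⟩⟩, ⟨Cs, .inr ⟨rfl, rfl⟩⟩]
  · have hpair := eq_pair_or_eq_pair_of_toFinset_eq hrs hL (hLH.trans hroles)
    obtain ⟨⟨C₁, t₁⟩, ⟨C₂, t₂⟩, rfl⟩ : ∃ x y, L = [x, y] := List.length_eq_two.1 <| by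
      rcases hpair with h | h <;> simpa using congrArg List.length h
    simp only [List.map_cons, List.map_nil, List.cons.injEq, and_true] at hpair
    rcases hpair with ⟨rfl, rfl⟩ | ⟨rfl, rfl⟩
    · obtain ⟨rfl, rfl⟩ : C₁ = Cr ∧ C₂ = Cs := by simpa [hrs, hrs.symm] using hR
      exact h
    · obtain ⟨rfl, rfl⟩ : C₁ = Cs ∧ C₂ = Cr := by simpa [hrs, hrs.symm] using hR
      exact h.par_comm

theorem ConformanceRel.implements_pair {R : Orc → Role → Prop} (hR : ConformanceRel R H)
    (hrs : r ≠ s) (hroles : rolesC H = {r, s}) {Cr Cs : Orc} (hr : R Cr r) (hs : R Cs s) :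
    Implements (.par (.atom Cr r) (.atom Cs s)) H :=
  hR.2 [(Cr, r), (Cs, s)] (List.cons_ne_nil _ _) (by simp [hrs]) (by simp [hroles])
    (by simp [hr, hs])

end TwoRoles

theorem ctrace_par_comm {a b : AName} {r s : Role} {w : List (AName × Role × Role)}
    (hw : w ∈ [[(a, r, s), (b, r, s)], [(b, r, s), (a, r, s)]]) :
    CTrace (.par (.comm a r s) (.comm b r s)) w := by
  simp only [List.mem_cons, List.not_mem_nil, or_false] at hw
  rcases hw with rfl | rfl
  · exact .comm (.parL .comm nofun) (.comm (.parR .comm nofun) (.tick (.parTick .one .one)))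
  · exact .comm (.parR .comm nofun) (.comm (.parL .comm nofun) (.tick (.parTick .one .one)))

open Sys in
theorem implements_par_comm_of_check {a b : AName} {r s : Role} {n : ℕ} {P : Sys}
    (hP : allReachB (reachesTickB n) n P)
    (hw : ∀ w ∈ weakTraces n P, w ∈ [[(a, r, s), (b, r, s)], [(b, r, s), (a, r, s)]]) :
    Implements P (.par (.comm a r s) (.comm b r s)) :=
  implements_of_allReachB hP fun w h => ctrace_par_comm (hw w h)

theorem implements_proj_zero_one :
    Implements (.par (.atom (.par (.out 0 1) (.out 1 1)) 0) (.atom (.par (.inp 0) (.inp 1)) 1))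
      (.par (.comm 0 0 1) (.comm 1 0 1)) :=
  implements_par_comm_of_check (n := 6) (by decide) (by decide)

theorem implements_par_r_seq_s_zero_one :
    Implements (.par (.atom (par_r 0 1 1) 0) (.atom (seq_s 0 1) 1))
      (.par (.comm 0 0 1) (.comm 1 0 1)) :=
  implements_par_comm_of_check (n := 6) (by decide) (by decide)

theorem implements_seq_r_par_s_zero_one :
    Implements (.par (.atom (seq_r 0 1 1) 0) (.atom (par_s 0 1) 1))
      (.par (.comm 0 0 1) (.comm 1 0 1)) :=
  implements_par_comm_of_check (n := 6) (by decide) (by decide)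

-- `r` commits to sending `a` first and `s` to receiving `b` first: a deadlock.
theorem not_correct_seq_r_seq_s_zero_one :
    ¬ Correct (.par (.atom (seq_r 0 1 1) 0) (.atom (seq_s 0 1) 1)) :=
  Sys.not_correct_of_reach_allReachB (n := 0)
    (.step (.inl (.parL (.atomTau (.choiceL (.seqL .tau nofun))) nofun))
      (.step (.inl (.parR (.atomTau (.choiceR (.seqL .tau nofun))) nofun)) (.refl _)))
    (by decide)

/-- There is no maximal conformance relation: for the
well-formed choreography `H = a_{r→s} | b_{r→s}` there are conformance
relations `⊲¹` and `⊲²` as indicated, but `[τ;ā_s;τ;b̄_s + τ;b̄_s;τ;ā_s]_r ||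
[τ;a;b + τ;b;a]_s` is not correct, so no conformance relation contains the
union of `⊲¹` and `⊲²`. -/
theorem no_maximal_conformance_relation
    (a b : AName) (r s : Role) (hab : a ≠ b) (hrs : r ≠ s) :
    WellFormed (.par (.comm a r s) (.comm b r s)) ∧
    (∃ R : Orc → Role → Prop, ConformanceRel R (.par (.comm a r s) (.comm b r s)) ∧
        R (par_r a b s) r ∧ R (seq_s a b) s) ∧
    (∃ R : Orc → Role → Prop, ConformanceRel R (.par (.comm a r s) (.comm b r s)) ∧
        R (seq_r a b s) r ∧ R (par_s a b) s) ∧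
    ¬ Correct (.par (.atom (seq_r a b s) r) (.atom (seq_s a b) s)) ∧
    (∀ R : Orc → Role → Prop, ConformanceRel R (.par (.comm a r s) (.comm b r s)) →
      ¬ (R (seq_r a b s) r ∧ R (seq_s a b) s)) := by
  -- After `a, b, r, s := f 0, f 1, g 0, g 1`, each system below is definitionally the renaming
  -- of its instance at `0, 1`.
  obtain ⟨f, rfl, rfl⟩ := exists_equiv_apply_zero_apply_one hab
  obtain ⟨g, rfl, rfl⟩ := exists_equiv_apply_zero_apply_one hrs
  have hroles :
      rolesC (.par (.comm (f 0) (g 0) (g 1)) (.comm (f 1) (g 0) (g 1))) = {g 0, g 1} := by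
    simp [rolesC]
  have stuck := mt (Correct.of_rename f g) not_correct_seq_r_seq_s_zero_one
  refine ⟨wellFormed_of_rolesC_eq_pair hrs hroles ?_,
    ⟨_, conformanceRel_pair hrs hroles (implements_par_r_seq_s_zero_one.rename f g),
      .inl ⟨rfl, rfl⟩, .inr ⟨rfl, rfl⟩⟩,
    ⟨_, conformanceRel_pair hrs hroles (implements_seq_r_par_s_zero_one.rename f g),
      .inl ⟨rfl, rfl⟩, .inr ⟨rfl, rfl⟩⟩,
    stuck, fun R hR ⟨hr, hs⟩ => stuck (hR.implements_pair hrs hroles hr hs).1⟩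
  simp only [proj, if_pos, if_neg hrs.symm]
  exact implements_proj_zero_one.rename f g
end

section
/- Internal choices on outputs can be reduced under the subcontract relation for output persistent contracts: τ;ā_l ⪯ τ;ā_l + τ;b̄_l, for any role l and distinct action names a and b. -/
/-!
Every transition of `τ;ā_l` is also one of `τ;ā_l + τ;b̄_l`. Along a computation of
`[τ;ā_l]_k || P`, as long as the contract has not moved, the system `[τ;ā_l + τ;b̄_l]_k || P`
mirrors every step; once it has moved, the state is reachable from that system itself. In a
state of the first kind the contract's `τ` step is still available, and it leads to a state of
the second kind, from which success is reachable by correctness of the larger system.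
-/

theorem Reach.trans {P Q R : Sys} (hPQ : Reach P Q) (hQR : Reach Q R) : Reach P R := by
  induction hPQ with
  | refl => exact hQR
  | step h _ ih => exact .step h (ih hQR)

section SimulationOnTheLeft

variable {X Y : Sys} (hXY : ∀ α S, SStep X α S → SStep Y α S)
include hXY

theorem SStep.par_left_cases {Q S : Sys} {α : SLabel} (h : SStep (.par X Q) α S) :
    (∃ Q', S = .par X Q' ∧ SStep (.par Y Q) α (.par Y Q')) ∨ SStep (.par Y Q) α S := by
  cases h with
  | parL hX hne => exact .inr (.parL (hXY _ _ hX) hne)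
  | parR hQ hne => exact .inl ⟨_, rfl, .parR hQ hne⟩
  | commLR hX hQ => exact .inr (.commLR (hXY _ _ hX) hQ)
  | commRL hX hQ => exact .inr (.commRL (hXY _ _ hX) hQ)
  | parTick hX hQ => exact .inr (.parTick (hXY _ _ hX) hQ)

theorem CompleteStep.par_left_cases {Q S : Sys} (h : CompleteStep (.par X Q) S) :
    (∃ Q', S = .par X Q' ∧ CompleteStep (.par Y Q) (.par Y Q')) ∨
      CompleteStep (.par Y Q) S := by
  rcases h with hτ | ⟨a, r, s, hc⟩
  · rcases SStep.par_left_cases hXY hτ with ⟨Q', rfl, h'⟩ | h'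
    · exact .inl ⟨Q', rfl, .inl h'⟩
    · exact .inr (.inl h')
  · rcases SStep.par_left_cases hXY hc with ⟨Q', rfl, h'⟩ | h'
    · exact .inl ⟨Q', rfl, .inr ⟨a, r, s, h'⟩⟩
    · exact .inr (.inr ⟨a, r, s, h'⟩)

theorem Reach.par_left_cases {Q S : Sys} (h : Reach (.par X Q) S) :
    (∃ Q', S = .par X Q' ∧ Reach (.par Y Q) (.par Y Q')) ∨ Reach (.par Y Q) S := by
  generalize hXQ : Sys.par X Q = XQ at h
  induction h generalizing Q with
  | refl => exact .inl ⟨Q, hXQ.symm, .refl _⟩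
  | step hstep hrest ih =>
    subst hXQ
    rcases CompleteStep.par_left_cases hXY hstep with ⟨Q', rfl, h'⟩ | h'
    · rcases ih rfl with ⟨Q'', hS, hR⟩ | hR
      · exact .inl ⟨Q'', hS, .step h' hR⟩
      · exact .inr (.step h' hR)
    · exact .inr (.step h' hrest)

end SimulationOnTheLeft

theorem SStep.atom_mono {C' C : Orc} (hsub : ∀ μ D, OStep C' μ D → OStep C μ D) (l : Role)
    (α : SLabel) (S : Sys) (h : SStep (.atom C' l) α S) : SStep (.atom C l) α S := by
  cases h with
  | atomTau h => exact .atomTau (hsub _ _ h)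
  | atomInp h => exact .atomInp (hsub _ _ h)
  | atomOut h => exact .atomOut (hsub _ _ h)
  | atomTick h => exact .atomTick (hsub _ _ h)

theorem subcontract_of_ostep_subset {C' C : Orc} (hsub : ∀ μ D, OStep C' μ D → OStep C μ D)
    (hτ : ∃ D, OStep C' .tau D) : Subcontract C' C := by
  intro l _ P _ _ _ hC S hS
  rcases Reach.par_left_cases (SStep.atom_mono hsub l) hS with ⟨Q, rfl, hQ⟩ | hS
  · obtain ⟨D, hD⟩ := hτ
    have hstep {E : Orc} (hE : OStep E .tau D) :
        CompleteStep (.par (.atom E l) Q) (.par (.atom D l) Q) :=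
      .inl (.parL (.atomTau hE) nofun)
    obtain ⟨S', hS', htick⟩ := hC _ (hQ.trans (.step (hstep (hsub _ _ hD)) (.refl _)))
    exact ⟨S', .step (hstep hD) hS', htick⟩
  · exact hC S hS

theorem output_choice_reduction_general (a b : AName) (l : Role) :
    Subcontract (.seq .tau (.out a l))
      (.choice (.seq .tau (.out a l)) (.seq .tau (.out b l))) :=
  subcontract_of_ostep_subset (fun _ _ => .choiceL) ⟨_, .seqL .tau nofun⟩

/-- Internal choices on outputs can be reduced under the
subcontract relation for output persistent contracts:
`τ;ā_l ⪯ τ;ā_l + τ;b̄_l` for any role `l` and distinct names `a`, `b`. -/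
theorem output_choice_reduction (a b : AName) (l : Role) (hab : a ≠ b) :
    Subcontract (.seq .tau (.out a l))
      (.choice (.seq .tau (.out a l)) (.seq .tau (.out b l))) :=
  output_choice_reduction_general a b l
end

section
/- Under CCS name-based (unlocated) communication input extension fails: the composition [a] || [τ;ā;b] || [τ;b̄] is a correct composition, while the composition [a+b] || [τ;ā;b] || [τ;b̄] is not a correct composition (the leftmost contract can capture the output b̄ intended for the middle contract). Hence, with unlocated outputs, a+b is not a subcontract of a. -/
/-- Contracts with unlocated outputs. -/
inductive UOrc : Type
  | zero : UOrc
  | one : UOrc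
  | tau : UOrc
  | inp : AName → UOrc        -- input a
  | out : AName → UOrc        -- output ā (unlocated)
  | seq : UOrc → UOrc → UOrc
  | choice : UOrc → UOrc → UOrc
  | par : UOrc → UOrc → UOrc
  | star : UOrc → UOrc
  deriving DecidableEq

/-- Labels of the contract semantics. -/
inductive ULabel : Type
  | tau : ULabel
  | inp : AName → ULabel
  | out : AName → ULabel
  | tick : ULabel
  deriving DecidableEq

/-- Operational semantics of contracts. -/
inductive UStep : UOrc → ULabel → UOrc → Prop
  | one : UStep .one .tick .zero
  | tau : UStep .tau .tau .one
  | inp : UStep (.inp a) (.inp a) .one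
  | out : UStep (.out a) (.out a) .one
  | choiceL : UStep C μ C' → UStep (.choice C D) μ C'
  | choiceR : UStep D μ D' → UStep (.choice C D) μ D'
  | seqL : UStep C μ C' → μ ≠ .tick → UStep (.seq C D) μ (.seq C' D)
  | seqTick : UStep C .tick C' → UStep D μ D' → UStep (.seq C D) μ D'
  | parL : UStep C μ C' → μ ≠ .tick → UStep (.par C D) μ (.par C' D)
  | parR : UStep D μ D' → μ ≠ .tick → UStep (.par C D) μ (.par C D')
  | parTick : UStep C .tick C' → UStep D .tick D' → UStep (.par C D) .tick (.par C' D')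
  | starTick : UStep (.star C) .tick .zero
  | starStep : UStep C μ C' → μ ≠ .tick → UStep (.star C) μ (.seq C' (.star C))

/-- Systems: parallel compositions of contracts `[C₁] || … || [Cₙ]`. -/
inductive USys : Type
  | atom : UOrc → USys
  | par : USys → USys → USys
  deriving DecidableEq

/-- System semantics: CCS-style name-based communication, the synchronization
of an output `ā` with an input `a` of another component is internal (`τ`);
`√` synchronizes globally. -/
inductive USStep : USys → ULabel → USys → Prop
  | atom : UStep C μ C' → USStep (.atom C) μ (.atom C')
  | parL : USStep P μ P' → μ ≠ .tick → USStep (.par P Q) μ (.par P' Q)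
  | parR : USStep Q μ Q' → μ ≠ .tick → USStep (.par P Q) μ (.par P Q')
  | syncLR : USStep P (.out a) P' → USStep Q (.inp a) Q' →
      USStep (.par P Q) .tau (.par P' Q')
  | syncRL : USStep P (.inp a) P' → USStep Q (.out a) Q' →
      USStep (.par P Q) .tau (.par P' Q')
  | parTick : USStep P .tick P' → USStep Q .tick Q' → USStep (.par P Q) .tick (.par P' Q')

/-- Reachability through internal (`τ`, including synchronizations) steps. -/
inductive UReach : USys → USys → Prop
  | refl (P) : UReach P P
  | step : USStep P .tau P' → UReach P' P'' → UReach P P''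

/-- `P` can perform `√`. -/
def UCanTick (P : USys) : Prop := ∃ P', USStep P .tick P'

/-- Correct composition `P↓`: every reachable state can reach a state able to
perform `√`. -/
def UCorrect (P : USys) : Prop :=
  ∀ P', UReach P P' → ∃ P'', UReach P' P'' ∧ UCanTick P''

/-- Subcontract relation for unlocated communication: `C'` is a subcontract of
`C` iff for every composition `P` of contracts, `([C] || P)↓` implies
`([C'] || P)↓`. -/
def USubcontract (C' C : UOrc) : Prop :=
  ∀ P : USys, UCorrect (.par (.atom C) P) → UCorrect (.par (.atom C') P)

/-- `τ;ā;b` -/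
def mid (a b : AName) : UOrc := .seq .tau (.seq (.out a) (.inp b))

/-- `τ;b̄` -/
def rgt (b : AName) : UOrc := .seq .tau (.out b)

/-!
With name-based communication an output `b̄` may be consumed by any component offering the
input `b`.  In `[a] || [τ;ā;b] || [τ;b̄]` the only input `b` is the middle one (as `a ≠ b`), so the
seven reachable states all lead to `[1] || [1] || [1]`, which can perform `√`.  Replacing `a` by
`a + b` lets the leftmost contract take `b̄` first; the middle contract is then left with an `ā`
nobody receives, a deadlock that is not successful termination.
-/

section StepInversion

variable {a : AName} {C D E : UOrc} {μ : ULabel}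

@[simp] lemma uStep_one_iff : UStep .one μ E ↔ μ = .tick ∧ E = .zero := by
  constructor
  · rintro ⟨⟩; exact ⟨rfl, rfl⟩
  · rintro ⟨rfl, rfl⟩; exact .one

@[simp] lemma uStep_tau_iff : UStep .tau μ E ↔ μ = .tau ∧ E = .one := by
  constructor
  · rintro ⟨⟩; exact ⟨rfl, rfl⟩
  · rintro ⟨rfl, rfl⟩; exact .tau

@[simp] lemma uStep_inp_iff : UStep (.inp a) μ E ↔ μ = .inp a ∧ E = .one := by
  constructor
  · rintro ⟨⟩; exact ⟨rfl, rfl⟩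
  · rintro ⟨rfl, rfl⟩; exact .inp

@[simp] lemma uStep_out_iff : UStep (.out a) μ E ↔ μ = .out a ∧ E = .one := by
  constructor
  · rintro ⟨⟩; exact ⟨rfl, rfl⟩
  · rintro ⟨rfl, rfl⟩; exact .out

@[simp] lemma uStep_choice_iff : UStep (.choice C D) μ E ↔ UStep C μ E ∨ UStep D μ E := by
  constructor
  · intro h
    cases h with
    | choiceL h => exact .inl h
    | choiceR h => exact .inr h
  · rintro (h | h)
    · exact .choiceL h
    · exact .choiceR h

@[simp] lemma uStep_seq_iff : UStep (.seq C D) μ E ↔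
    (∃ C', UStep C μ C' ∧ μ ≠ .tick ∧ E = .seq C' D) ∨
    (∃ C', UStep C .tick C') ∧ UStep D μ E := by
  constructor
  · intro h
    cases h with
    | seqL h hμ => exact .inl ⟨_, h, hμ, rfl⟩
    | seqTick h hD => exact .inr ⟨⟨_, h⟩, hD⟩
  · rintro (⟨C', h, hμ, rfl⟩ | ⟨⟨C', h⟩, hD⟩)
    · exact .seqL h hμ
    · exact .seqTick h hD

end StepInversion

section SystemStepInversion

variable {C : UOrc} {P Q R : USys} {μ : ULabel}

@[simp] lemma uSStep_atom_iff : USStep (.atom C) μ R ↔ ∃ C', UStep C μ C' ∧ R = .atom C' := by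
  constructor
  · rintro ⟨h⟩; exact ⟨_, h, rfl⟩
  · rintro ⟨C', h, rfl⟩; exact .atom h

@[simp] lemma uSStep_par_iff : USStep (.par P Q) μ R ↔
    (∃ P', USStep P μ P' ∧ μ ≠ .tick ∧ R = .par P' Q) ∨
    (∃ Q', USStep Q μ Q' ∧ μ ≠ .tick ∧ R = .par P Q') ∨
    (∃ a P' Q', μ = .tau ∧ USStep P (.out a) P' ∧ USStep Q (.inp a) Q' ∧ R = .par P' Q') ∨
    (∃ a P' Q', μ = .tau ∧ USStep P (.inp a) P' ∧ USStep Q (.out a) Q' ∧ R = .par P' Q') ∨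
    (∃ P' Q', μ = .tick ∧ USStep P .tick P' ∧ USStep Q .tick Q' ∧ R = .par P' Q') := by
  constructor
  · intro h
    cases h with
    | parL h hμ => exact .inl ⟨_, h, hμ, rfl⟩
    | parR h hμ => exact .inr <| .inl ⟨_, h, hμ, rfl⟩
    | syncLR hP hQ => exact .inr <| .inr <| .inl ⟨_, _, _, rfl, hP, hQ, rfl⟩
    | syncRL hP hQ => exact .inr <| .inr <| .inr <| .inl ⟨_, _, _, rfl, hP, hQ, rfl⟩
    | parTick hP hQ => exact .inr <| .inr <| .inr <| .inr ⟨_, _, rfl, hP, hQ, rfl⟩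
  · rintro (⟨P', h, hμ, rfl⟩ | ⟨Q', h, hμ, rfl⟩ | ⟨a, P', Q', rfl, hP, hQ, rfl⟩ |
      ⟨a, P', Q', rfl, hP, hQ, rfl⟩ | ⟨P', Q', rfl, hP, hQ, rfl⟩)
    · exact .parL h hμ
    · exact .parR h hμ
    · exact .syncLR hP hQ
    · exact .syncRL hP hQ
    · exact .parTick hP hQ

end SystemStepInversion

section Correctness

variable {I : USys → Prop}

lemma UReach.invariant (hI : ∀ Q Q', I Q → USStep Q .tau Q' → I Q') {P Q : USys}
    (hPQ : UReach P Q) (hP : I P) : I Q := by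
  induction hPQ with
  | refl => exact hP
  | step hs _ ih => exact ih (hI _ _ hP hs)

lemma UCorrect.of_invariant (hI : ∀ Q Q', I Q → USStep Q .tau Q' → I Q')
    (hprog : ∀ Q, I Q → ∃ Q', UReach Q Q' ∧ UCanTick Q') {P : USys} (hP : I P) :
    UCorrect P :=
  fun _ hPQ => hprog _ (hPQ.invariant hI hP)

lemma not_uCorrect_of_uReach_stuck {P Q : USys} (hPQ : UReach P Q)
    (hτ : ∀ Q', ¬ USStep Q .tau Q') (htick : ¬ UCanTick Q) : ¬ UCorrect P := by
  intro hP
  obtain ⟨Q', hQQ', hQ'⟩ := hP Q hPQ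
  cases hQQ' with
  | refl => exact htick hQ'
  | step hs _ => exact hτ _ hs

end Correctness

def par3 (l m r : UOrc) : USys := .par (.atom l) (.par (.atom m) (.atom r))

def mid₁ (a b : AName) : UOrc := .seq .one (.seq (.out a) (.inp b))

def mid₂ (b : AName) : UOrc := .seq .one (.inp b)

def rgt₁ (b : AName) : UOrc := .seq .one (.out b)

section InputExtension

variable (a b : AName)

def reachableStates : Set USys :=
  {par3 (.inp a) (mid a b) (rgt b), par3 (.inp a) (mid₁ a b) (rgt b),
    par3 (.inp a) (mid a b) (rgt₁ b), par3 (.inp a) (mid₁ a b) (rgt₁ b),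
    par3 .one (mid₂ b) (rgt b), par3 .one (mid₂ b) (rgt₁ b), par3 .one .one .one}

variable {a b}

lemma reachableStates_tau_closed (hab : a ≠ b) (Q Q' : USys) (hQ : Q ∈ reachableStates a b)
    (hQQ' : USStep Q .tau Q') : Q' ∈ reachableStates a b := by
  revert Q'
  simp only [reachableStates, Set.mem_insert_iff, Set.mem_singleton_iff] at hQ ⊢
  rcases hQ with rfl | rfl | rfl | rfl | rfl | rfl | rfl <;>
    simp [par3, mid, mid₁, mid₂, rgt, rgt₁, or_imp, forall_and, hab]

lemma uCanTick_done : UCanTick (par3 .one .one .one) :=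
  ⟨par3 .zero .zero .zero, by simp [par3]⟩

lemma uReach_done_of_mem_reachableStates {Q : USys} (hQ : Q ∈ reachableStates a b) :
    UReach Q (par3 .one .one .one) := by
  have h₆ : UReach (par3 .one (mid₂ b) (rgt₁ b)) (par3 .one .one .one) :=
    .step (by simp [par3, mid₂, rgt₁]) (.refl _)
  have h₅ : UReach (par3 .one (mid₂ b) (rgt b)) (par3 .one .one .one) :=
    .step (by simp [par3, rgt, rgt₁]) h₆
  have h₄ : UReach (par3 (.inp a) (mid₁ a b) (rgt₁ b)) (par3 .one .one .one) :=
    .step (by simp [par3, mid₁, mid₂]) h₆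
  have h₃ : UReach (par3 (.inp a) (mid a b) (rgt₁ b)) (par3 .one .one .one) :=
    .step (by simp [par3, mid, mid₁]) h₄
  have h₂ : UReach (par3 (.inp a) (mid₁ a b) (rgt b)) (par3 .one .one .one) :=
    .step (by simp [par3, mid₁, mid₂]) h₅
  have h₁ : UReach (par3 (.inp a) (mid a b) (rgt b)) (par3 .one .one .one) :=
    .step (by simp [par3, mid, mid₁]) h₂
  simp only [reachableStates, Set.mem_insert_iff, Set.mem_singleton_iff] at hQ
  rcases hQ with rfl | rfl | rfl | rfl | rfl | rfl | rfl
  exacts [h₁, h₂, h₃, h₄, h₅, h₆, .refl _]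

lemma uCorrect_inp_mid_rgt (hab : a ≠ b) : UCorrect (par3 (.inp a) (mid a b) (rgt b)) :=
  UCorrect.of_invariant (reachableStates_tau_closed hab)
    (fun _ hQ => ⟨_, uReach_done_of_mem_reachableStates hQ, uCanTick_done⟩)
    (Set.mem_insert _ _)

lemma uReach_capture :
    UReach (par3 (.choice (.inp a) (.inp b)) (mid a b) (rgt b)) (par3 .one (mid₁ a b) .one) :=
  .step (P' := par3 (.choice (.inp a) (.inp b)) (mid a b) (rgt₁ b)) (by simp [par3, rgt, rgt₁]) <|
  .step (P' := par3 .one (mid a b) .one) (by simp [par3, rgt₁]) <|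
  .step (by simp [par3, mid, mid₁]) (.refl _)

lemma not_uCorrect_choice_mid_rgt :
    ¬ UCorrect (par3 (.choice (.inp a) (.inp b)) (mid a b) (rgt b)) :=
  not_uCorrect_of_uReach_stuck uReach_capture (by simp [par3, mid₁])
    (by simp [UCanTick, par3, mid₁])

end InputExtension

/-- Under CCS name-based (unlocated) communication input
extension fails: `[a] || [τ;ā;b] || [τ;b̄]` is a correct composition, while
`[a+b] || [τ;ā;b] || [τ;b̄]` is not (the leftmost contract can capture the
output `b̄` intended for the middle contract); hence `a+b` is not a
subcontract of `a`. -/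
theorem input_extension_fails_with_unlocated_communication
    (a b : AName) (hab : a ≠ b) :
    UCorrect (.par (.atom (.inp a)) (.par (.atom (mid a b)) (.atom (rgt b)))) ∧
    ¬ UCorrect (.par (.atom (.choice (.inp a) (.inp b)))
        (.par (.atom (mid a b)) (.atom (rgt b)))) ∧
    ¬ USubcontract (.choice (.inp a) (.inp b)) (.inp a) :=
  ⟨uCorrect_inp_mid_rgt hab, not_uCorrect_choice_mid_rgt,
    fun hsub => not_uCorrect_choice_mid_rgt (hsub _ (uCorrect_inp_mid_rgt hab))⟩
end

section
/- The converse of the soundness theorem for the should-testing characterization fails: there exist output persistent contracts C and C' with C' ⪯ C but NOT NF(C' \\ (I(C') − I(C))) ⪯_test NF(C). In particular the uncontrollable contracts C = 0 and C' = a;b;0 satisfy a;b;0 ⪯ 0 and 0 ⪯ a;b;0, yet they are not related by the should-testing preorder (after restriction and normal form). Hence the subcontract relation ⪯ is strictly coarser than should-testing. -/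
/-- `a;b;0` -/
def inSeq0 (a b : AName) : Orc := .seq (.inp a) (.seq (.inp b) .zero)

/-!
Neither `0` nor `a;b;0` can ever perform `√`. Since `√` of a system needs `√` of each of its
components, no composition containing either contract is correct; both are uncontrollable, and
`⪯` holds vacuously between them in both directions. Should-testing still tells them apart: the
test that reports success as soon as it has received `a` is should-passed by `a;b;0`, whose
only move is that input, but not by the stuck contract `0`.
-/

lemma OReach.trans {C C' C'' : Orc} (h : OReach C C') (h' : OReach C' C'') : OReach C C'' := by
  induction h with
  | refl => exact h'
  | step hs _ ih => exact .step hs (ih h')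

lemma OStep.oroles_subset {C C' : Orc} {μ : OLabel} (h : OStep C μ C') :
    oroles C' ⊆ oroles C := by
  induction h <;> simp only [oroles] <;> grind

lemma OStep.mem_oroles_of_out {C C' : Orc} {a : AName} {l : Role}
    (h : OStep C (.out a l) C') : l ∈ oroles C := by
  generalize hμ : OLabel.out a l = μ at h
  induction h <;> simp_all [oroles]

lemma OReach.oroles_subset {C C' : Orc} (h : OReach C C') : oroles C' ⊆ oroles C := by
  induction h with
  | refl => exact subset_rfl
  | step hs _ ih => exact ih.trans hs.oroles_subset

lemma outputPersistent_of_oroles_eq_empty {C : Orc} (hC : oroles C = ∅) :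
    OutputPersistent C := by
  rintro C' hC' a l ⟨D, hD⟩
  have := hC'.oroles_subset hD.mem_oroles_of_out
  simp [hC] at this

def NeverTicks (C : Orc) : Prop := ∀ C', OReach C C' → ¬ ∃ D, OStep C' .tick D

lemma neverTicks_zero : NeverTicks .zero := by
  rintro _ (_ | ⟨⟨⟩, _⟩) ⟨_, ⟨⟩⟩

lemma NeverTicks.seq {D : Orc} (hD : NeverTicks D) (C : Orc) : NeverTicks (.seq C D) := by
  intro X hX
  generalize hS : Orc.seq C D = S at hX
  induction hX generalizing C with
  | refl =>
    subst hS
    rintro ⟨_, hs⟩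
    cases hs with
    | seqL _ hne => exact hne rfl
    | seqTick _ hDs => exact hD D (.refl _) ⟨_, hDs⟩
  | step hs hrest ih =>
    subst hS
    cases hs with
    | seqL _ _ => exact ih _ rfl
    | seqTick _ hDs => exact hD _ (.step hDs hrest)

lemma neverTicks_inSeq0 (a b : AName) : NeverTicks (inSeq0 a b) :=
  (neverTicks_zero.seq _).seq _

lemma SStep.atom_inv {C : Orc} {r : Role} {μ : SLabel} {S : Sys} (h : SStep (.atom C r) μ S) :
    ∃ ν C', OStep C ν C' ∧ S = .atom C' r := by
  cases h <;> exact ⟨_, _, ‹_›, rfl⟩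

lemma CompleteStep.par_atom_inv {C : Orc} {l : Role} {P S : Sys}
    (h : CompleteStep (.par (.atom C l) P) S) :
    ∃ C' P', S = .par (.atom C' l) P' ∧ OReach C C' := by
  rcases h with h | ⟨a, r, s, h⟩
  · cases h with
    | parL hC =>
      obtain ⟨_, C', hs, rfl⟩ := hC.atom_inv
      exact ⟨C', P, rfl, .step hs (.refl _)⟩
    | parR _ => exact ⟨C, _, rfl, .refl _⟩
  · cases h with
    | parL hC => cases hC
    | parR _ => exact ⟨C, _, rfl, .refl _⟩
    | commLR hC _ | commRL hC _ =>
      obtain ⟨_, C', hs, hS⟩ := hC.atom_inv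
      cases hS
      exact ⟨C', _, rfl, .step hs (.refl _)⟩

lemma Reach.par_atom_inv {C : Orc} {l : Role} {P S : Sys} (h : Reach (.par (.atom C l) P) S) :
    ∃ C' P', S = .par (.atom C' l) P' ∧ OReach C C' := by
  generalize hS : Sys.par (.atom C l) P = S₀ at h
  induction h generalizing C P with
  | refl => exact ⟨C, P, hS.symm, .refl _⟩
  | step hs _ ih =>
    subst hS
    obtain ⟨C₁, P₁, rfl, hC₁⟩ := hs.par_atom_inv
    obtain ⟨C', P', rfl, hC'⟩ := ih rfl
    exact ⟨C', P', rfl, hC₁.trans hC'⟩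

lemma Correct.exists_reach_tick_left {C : Orc} {l : Role} {P : Sys}
    (h : Correct (.par (.atom C l) P)) : ∃ C', OReach C C' ∧ ∃ D, OStep C' .tick D := by
  obtain ⟨S, hS, Q, hQ⟩ := h _ (.refl _)
  obtain ⟨C', P', rfl, hC'⟩ := hS.par_atom_inv
  cases hQ with
  | parL _ hne | parR _ hne => exact absurd rfl hne
  | parTick hC _ =>
    cases hC with
    | atomTick hs => exact ⟨C', hC', _, hs⟩

lemma NeverTicks.uncontrollable {C : Orc} (hC : NeverTicks C) : Uncontrollable C := by
  rintro ⟨l, P, -, -, -, -, hP⟩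
  obtain ⟨C', hC', hs⟩ := hP.exists_reach_tick_left
  exact hC C' hC' hs

lemma Uncontrollable.subcontract {C : Orc} (hC : Uncontrollable C) (C' : Orc) :
    Subcontract C' C := by
  intro l hl P hP hwf hlP hcorr
  exact hC ⟨l, P, fun h => hl (Finset.mem_union_left _ h), hP, hwf, hlP, hcorr⟩ |>.elim

def inputTest (a : AName) : TestLTS where
  S := Bool
  init := false
  step s lab s' :=
    (s = false ∧ lab = .sync (.inp a) ∧ s' = true) ∨ (s = true ∧ lab = .succ ∧ s' = true)

lemma TCReach.invariant {T : TestLTS} {I : Orc × T.S → Prop}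
    (hI : ∀ {c c'}, TCStep T c c' → I c → I c') {c c' : Orc × T.S} (h : TCReach T c c')
    (hc : I c) : I c' := by
  induction h with
  | refl => exact hc
  | step hs _ ih => exact ih (hI hs hc)

lemma shd_inputTest {C C' : Orc} {a : AName} (hτ : ∀ D, ¬ OStep C .tau D)
    (ha : OStep C (.inp a) C') : Shd C (inputTest a) := by
  intro c hc
  have hinv : c = (C, false) ∨ c.2 = true := by
    refine hc.invariant (I := fun x => x = (C, false) ∨ x.2 = true) (fun hs hx => ?_) (.inl rfl)
    cases hs with
    | ctau hs =>
      rcases hx with hx | hx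
      · cases hx
        exact absurd hs (hτ _)
      · exact .inr hx
    | ttau ht => simp [inputTest] at ht
    | sync _ _ ht =>
      simp only [inputTest] at ht
      rcases ht with ⟨-, -, rfl⟩ | ⟨-, ⟨⟩, -⟩
      exact .inr rfl
  rcases hinv with rfl | htrue
  · exact ⟨(C', true), .step (.sync ha (by simp) (.inl ⟨rfl, rfl, rfl⟩)) (.refl _), true,
      .inr ⟨rfl, rfl, rfl⟩⟩
  · exact ⟨c, .refl _, true, .inr ⟨htrue, rfl, rfl⟩⟩

lemma not_shd_inputTest {C : Orc} (hC : ∀ μ D, ¬ OStep C μ D) (a : AName) :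
    ¬ Shd C (inputTest a) := by
  intro h
  obtain ⟨c, hc, t, ht⟩ := h _ (.refl _)
  have hc₀ : c = (C, false) := by
    refine hc.invariant (I := (· = (C, false))) (fun hs hx => ?_) rfl
    cases hs with
    | ctau hs | sync hs _ _ => cases hx; exact absurd hs (hC _ _)
    | ttau ht => simp [inputTest] at ht
  subst hc₀
  rcases ht with ⟨-, ⟨⟩, -⟩ | ⟨⟨⟩, -, -⟩

lemma not_shouldPre_zero_inSeq0 (a b : AName) : ¬ ShouldPre .zero (inSeq0 a b) := by
  have hzero : ∀ μ D, ¬ OStep .zero μ D := by rintro _ _ ⟨⟩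
  have hτ : ∀ D, ¬ OStep (inSeq0 a b) .tau D := by
    intro _ hs
    cases hs with
    | seqL hs _ | seqTick hs _ => cases hs
  exact fun h => not_shd_inputTest hzero a (h _ (shd_inputTest hτ (.seqL .inp (by simp))))

/-- The converse of the soundness theorem for the
should-testing characterization fails: there are output persistent contracts
`C`, `C'` with `C' ⪯ C` but not `NF(C' \\ (I(C') − I(C))) ⪯_test NF(C)`.
In particular `a;b;0 ⪯ 0` and `0 ⪯ a;b;0`, yet
`NF(0 \\ (I(0) − I(a;b;0))) ⪯_test NF(a;b;0)` fails; hence `⪯` is strictly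
coarser than should-testing. -/
theorem should_testing_converse_fails (a b : AName) :
    (∃ C C' : Orc, OutputPersistent C ∧ OutputPersistent C' ∧
      Subcontract C' C ∧
      ¬ ShouldPre (NF (restrict C' (inames C' \ inames C))) (NF C)) ∧
    Subcontract (inSeq0 a b) .zero ∧
    Subcontract .zero (inSeq0 a b) ∧
    ¬ ShouldPre (NF (restrict .zero (inames .zero \ inames (inSeq0 a b))))
        (NF (inSeq0 a b)) := by
  have hzero : Uncontrollable .zero := neverTicks_zero.uncontrollable
  have hinSeq0 : Uncontrollable (inSeq0 a b) := (neverTicks_inSeq0 a b).uncontrollable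
  refine ⟨⟨inSeq0 a b, .zero, outputPersistent_of_oroles_eq_empty rfl,
    outputPersistent_of_oroles_eq_empty rfl, hinSeq0.subcontract _, not_shouldPre_zero_inSeq0 a b⟩,
    hzero.subcontract _, hinSeq0.subcontract _, not_shouldPre_zero_inSeq0 a b⟩
end
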